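/- arXiv:2403.04318 — 6 statements merged into one kernel-verified Lean document; each statement's English description precedes it below -/
import Mathlib

section
/- Let G be a bipartite graph with parts A and B with e(G) ≥ ρ|A||B| for ρ ∈ (0,1), and let s be a positive integer. If ρ|A| is sufficiently large relative to s (say ρ|A| ≥ 6s! and ρ^s|B| ≥ 1), then there are at least (ρ|A|)^s/(3·s!) many s-element subsets S ⊆ A such that the vertices of S have at least ρ^s|B|/3 common neighbors in B. -/
open Finset
open scoped Classical

/-! Double count the pairs `(S, b)` where `S` is an `s`-subset of the neighbourhood of `b ∈ B`.
There are `∑ b, C(d b, s)` of them; as `C(d, s) ≥ (d + 1 - s)^s / s!`, Jensen's inequality and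
the edge count give at least `|B| (ρ|A| + 1 - s)^s / s!`, and Bernoulli's inequality with
`s (s - 1) ≤ s! ≤ ρ|A| / 6` makes this at least `(5/6) |B| (ρ|A|)^s / s!`. The `s`-sets with
fewer than `ρ^s |B| / 3` common neighbours account for at most
`C(|A|, s) ρ^s |B| / 3 ≤ (ρ|A|)^s |B| / (3 s!)` pairs and every other `s`-set for at most `|B|`,
so at least `(ρ|A|)^s / (2 s!)` of the `s`-sets have many common neighbours. -/

lemma powersetCard_filter_forall_mem {α : Type*} (A : Finset α) (p : α → Prop)
    [DecidablePred p] (s : ℕ) :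
    (A.powersetCard s).filter (fun S => ∀ a ∈ S, p a) = (A.filter p).powersetCard s := by
  ext S
  simp only [mem_filter, mem_powersetCard, subset_iff]
  grind

section DoubleCounting

variable {α β : Type*} (A : Finset α) (B : Finset β) (G : Finset (α × β))

lemma sum_card_commonNeighbors_eq_sum_choose (s : ℕ) :
    ∑ S ∈ A.powersetCard s, #(B.filter fun b => ∀ a ∈ S, (a, b) ∈ G) =
      ∑ b ∈ B, (#(A.filter fun a => (a, b) ∈ G)).choose s := by
  calc _ = ∑ b ∈ B, #((A.powersetCard s).filter fun S => ∀ a ∈ S, (a, b) ∈ G) :=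
        sum_card_bipartiteAbove_eq_sum_card_bipartiteBelow (fun S b => ∀ a ∈ S, (a, b) ∈ G)
    _ = _ := by simp_rw [powersetCard_filter_forall_mem, card_powersetCard]

lemma sum_card_filter_mem_eq_card (hG : G ⊆ A ×ˢ B) :
    ∑ b ∈ B, #(A.filter fun a => (a, b) ∈ G) = #G := by
  calc ∑ b ∈ B, #(A.filter fun a => (a, b) ∈ G)
      = ∑ b ∈ B, ∑ a ∈ A, if (a, b) ∈ G then 1 else 0 := by simp only [card_filter]
    _ = ∑ p ∈ A ×ˢ B, if p ∈ G then 1 else 0 :=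
        (sum_product_right A B fun p => if p ∈ G then 1 else 0).symm
    _ = #((A ×ˢ B).filter (· ∈ G)) := (card_filter _ _).symm
    _ = #G := by rw [filter_mem_eq_inter, inter_eq_right.2 hG]

end DoubleCounting

section Estimates

variable {ι : Type*}

lemma card_mul_pow_le_sum_pow {B : Finset ι} {x : ι → ℝ} {μ : ℝ} (hx : ∀ i ∈ B, 0 ≤ x i)
    (hμ : 0 ≤ μ) (hsum : #B * μ ≤ ∑ i ∈ B, x i) (s : ℕ) :
    #B * μ ^ s ≤ ∑ i ∈ B, x i ^ s := by
  rcases B.eq_empty_or_nonempty with rfl | hB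
  · simp
  have hcard : (0 : ℝ) < #B := by exact_mod_cast hB.card_pos
  have hw : ∑ _ ∈ B, (#B : ℝ)⁻¹ = 1 := by
    rw [sum_const, nsmul_eq_mul]
    field_simp
  have hjensen :=
    Real.pow_arith_mean_le_arith_mean_pow B (fun _ => (#B : ℝ)⁻¹) x (fun _ _ => by positivity)
      hw hx s
  rw [← mul_sum, ← mul_sum] at hjensen
  have hμ_le : μ ≤ (#B : ℝ)⁻¹ * ∑ i ∈ B, x i := by
    rw [inv_mul_eq_div, le_div_iff₀ hcard]
    linarith
  calc #B * μ ^ s ≤ #B * ((#B : ℝ)⁻¹ * ∑ i ∈ B, x i) ^ s := by gcongr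
    _ ≤ #B * ((#B : ℝ)⁻¹ * ∑ i ∈ B, x i ^ s) := by gcongr
    _ = ∑ i ∈ B, x i ^ s := by field_simp

lemma card_mul_pow_div_factorial_le_sum_choose {B : Finset ι} (d : ι → ℕ) {μ : ℝ} (s : ℕ)
    (hμ : (s : ℝ) ≤ μ + 1) (hsum : #B * μ ≤ ∑ i ∈ B, (d i : ℝ)) :
    #B * (μ + 1 - s) ^ s / s.factorial ≤ ∑ i ∈ B, ((d i).choose s : ℝ) := by
  set x : ι → ℝ := fun i => ((d i + 1 - s : ℕ) : ℝ)
  have hx : ∀ i, (d i : ℝ) + 1 - s ≤ x i := fun i => by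
    have : ((d i + 1 : ℕ) : ℝ) ≤ ((d i + 1 - s : ℕ) : ℝ) + s := by
      exact_mod_cast (le_tsub_add : d i + 1 ≤ d i + 1 - s + s)
    push_cast at this
    linarith
  have hxsum : #B * (μ + 1 - s) ≤ ∑ i ∈ B, x i :=
    calc #B * (μ + 1 - s) = #B * μ + ∑ _ ∈ B, (1 - s : ℝ) := by
          rw [sum_const, nsmul_eq_mul]
          ring
      _ ≤ ∑ i ∈ B, (d i : ℝ) + ∑ _ ∈ B, (1 - s : ℝ) := by gcongr
      _ = ∑ i ∈ B, ((d i : ℝ) + 1 - s) := by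
          rw [← sum_add_distrib]
          simp only [add_sub_assoc]
      _ ≤ ∑ i ∈ B, x i := sum_le_sum fun i _ => hx i
  calc #B * (μ + 1 - s) ^ s / s.factorial ≤ (∑ i ∈ B, x i ^ s) / s.factorial := by
        gcongr
        exact card_mul_pow_le_sum_pow (fun _ _ => Nat.cast_nonneg _) (by linarith) hxsum s
    _ = ∑ i ∈ B, x i ^ s / s.factorial := sum_div _ _ _
    _ ≤ ∑ i ∈ B, ((d i).choose s : ℝ) := sum_le_sum fun i _ => Nat.pow_le_choose s (d i)

lemma pow_mul_one_sub_le_sub_pow {y t : ℝ} (hy : 0 < y) (ht : t ≤ 2 * y) (s : ℕ) :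
    y ^ s * (1 - s * t / y) ≤ (y - t) ^ s := by
  have hbernoulli := one_add_mul_le_pow (a := -t / y) (by rw [le_div_iff₀ hy]; linarith) s
  calc y ^ s * (1 - s * t / y) = y ^ s * (1 + s * (-t / y)) := by ring
    _ ≤ y ^ s * (1 + -t / y) ^ s := by gcongr
    _ = (y - t) ^ s := by
        rw [← mul_pow]
        congr 1
        field_simp
        ring

lemma mul_sub_one_le_factorial (s : ℕ) : (s : ℝ) * (s - 1) ≤ s.factorial := by
  cases s with
  | zero => simp
  | succ k =>
    rw [Nat.factorial_succ]
    push_cast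
    rw [add_sub_cancel_right]
    gcongr
    exact_mod_cast Nat.self_le_factorial k

lemma five_sixths_mul_pow_le {y : ℝ} {s : ℕ} (hy : 6 * (s.factorial : ℝ) ≤ y) :
    5 / 6 * y ^ s ≤ (y + 1 - s) ^ s := by
  have hF : (0 : ℝ) < s.factorial := by positivity
  have hy0 : 0 < y := by linarith
  have hs : (s : ℝ) ≤ s.factorial := by exact_mod_cast Nat.self_le_factorial s
  have hratio : s * (s - 1) / y ≤ 1 / 6 := by
    rw [div_le_iff₀ hy0]
    linarith [mul_sub_one_le_factorial s]
  calc 5 / 6 * y ^ s ≤ y ^ s * (1 - s * (s - 1) / y) := by nlinarith [pow_pos hy0 s]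
    _ ≤ (y - (s - 1)) ^ s := pow_mul_one_sub_le_sub_pow hy0 (by linarith) s
    _ = (y + 1 - s) ^ s := by ring_nf

lemma sum_le_card_filter_mul_add_card_mul (P : Finset ι) (f : ι → ℝ) {M θ : ℝ}
    (hf : ∀ i ∈ P, f i ≤ M) (hθ : 0 ≤ θ) :
    ∑ i ∈ P, f i ≤ #(P.filter fun i => θ ≤ f i) * M + #P * θ := by
  rw [← sum_filter_add_sum_filter_not P (fun i => θ ≤ f i)]
  gcongr ?_ + ?_
  · calc _ ≤ ∑ _ ∈ P.filter (fun i => θ ≤ f i), M :=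
          sum_le_sum fun i hi => hf i (mem_filter.1 hi).1
      _ = _ := by rw [sum_const, nsmul_eq_mul]
  · calc _ ≤ ∑ _ ∈ P.filter (fun i => ¬θ ≤ f i), θ :=
          sum_le_sum fun i hi => (not_le.1 (mem_filter.1 hi).2).le
      _ = #(P.filter fun i => ¬θ ≤ f i) * θ := by rw [sum_const, nsmul_eq_mul]
      _ ≤ #P * θ := by
          gcongr
          exact filter_subset _ _

end Estimates

lemma five_sixths_mul_le_sum_card_commonNeighbors {α β : Type*} {A : Finset α} {B : Finset β}
    {G : Finset (α × β)} (hG : G ⊆ A ×ˢ B) {ρ : ℝ} (he : ρ * #A * #B ≤ (#G : ℝ)) {s : ℕ}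
    (hbig : 6 * (s.factorial : ℝ) ≤ ρ * #A) :
    #B * (5 / 6 * (ρ * #A) ^ s) / s.factorial ≤
      ∑ S ∈ A.powersetCard s, (#(B.filter fun b => ∀ a ∈ S, (a, b) ∈ G) : ℝ) := by
  have hdeg : #B * (ρ * #A) ≤ ∑ b ∈ B, (#(A.filter fun a => (a, b) ∈ G) : ℝ) := by
    rw [← Nat.cast_sum, sum_card_filter_mem_eq_card A B G hG]
    linarith
  have hs : (s : ℝ) ≤ ρ * #A + 1 := by
    have : (s : ℝ) ≤ s.factorial := Nat.cast_le.2 (Nat.self_le_factorial s)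
    linarith
  calc #B * (5 / 6 * (ρ * #A) ^ s) / s.factorial
        ≤ #B * (ρ * #A + 1 - s) ^ s / s.factorial := by
        gcongr
        exact five_sixths_mul_pow_le hbig
    _ ≤ _ := card_mul_pow_div_factorial_le_sum_choose _ s hs hdeg
    _ = _ := by exact_mod_cast (sum_card_commonNeighbors_eq_sum_choose A B G s).symm

theorem stmt_1_general {α β : Type} (A : Finset α) (B : Finset β) (G : Finset (α × β))
    (hG : G ⊆ A ×ˢ B) (ρ : ℝ)
    (he : ρ * A.card * B.card ≤ (G.card : ℝ))
    (s : ℕ)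
    (hbig : 6 * (s.factorial : ℝ) ≤ ρ * A.card) (hB : 1 ≤ ρ ^ s * B.card) :
    (ρ * A.card) ^ s / (3 * (s.factorial : ℝ)) ≤
      (((A.powersetCard s).filter fun S =>
        ρ ^ s * B.card / 3 ≤
          ((B.filter fun b => ∀ a ∈ S, (a, b) ∈ G).card : ℝ)).card : ℝ) := by
  have hlow := five_sixths_mul_le_sum_card_commonNeighbors hG he hbig
  set n : ℝ := ↑A.card
  set m : ℝ := ↑B.card
  set F : ℝ := ↑s.factorial
  set codeg : Finset α → ℝ := fun S => ↑(B.filter fun b => ∀ a ∈ S, (a, b) ∈ G).card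
  have hm : 0 < m := by
    refine (Nat.cast_nonneg _).lt_of_ne' fun (h : m = 0) => ?_
    rw [h, mul_zero] at hB
    exact absurd hB (by norm_num)
  have hup := sum_le_card_filter_mul_add_card_mul (A.powersetCard s) codeg (M := m)
    (θ := ρ ^ s * m / 3) (fun S _ => Nat.cast_le.2 (card_filter_le _ _)) (by linarith)
  have hsets : #(A.powersetCard s) * (ρ ^ s * m / 3) ≤ m * (ρ * n) ^ s / (3 * F) :=
    calc _ ≤ n ^ s / F * (ρ ^ s * m / 3) := by
          rw [card_powersetCard]
          gcongr
          exact Nat.choose_le_pow_div s _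
      _ = _ := by
          rw [mul_pow]
          field_simp
  have hgood : m * ((ρ * n) ^ s / (2 * F)) ≤
      m * #((A.powersetCard s).filter fun S => ρ ^ s * m / 3 ≤ codeg S) := by
    have : m * ((ρ * n) ^ s / (2 * F)) =
        m * (5 / 6 * (ρ * n) ^ s) / F - m * (ρ * n) ^ s / (3 * F) := by
      field_simp
      ring
    linarith
  have hρn : 0 < ρ * n := by linarith [(by positivity : 0 < F)]
  calc (ρ * n) ^ s / (3 * F) ≤ (ρ * n) ^ s / (2 * F) := by gcongr; norm_num
    _ ≤ _ := le_of_mul_le_mul_left hgood hm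

theorem stmt_1 {α β : Type} (A : Finset α) (B : Finset β) (G : Finset (α × β))
    (hG : G ⊆ A ×ˢ B) (ρ : ℝ) (hρ0 : 0 < ρ) (hρ1 : ρ < 1)
    (he : ρ * A.card * B.card ≤ (G.card : ℝ))
    (s : ℕ) (hs : 1 ≤ s)
    (hbig : 6 * (s.factorial : ℝ) ≤ ρ * A.card) (hB : 1 ≤ ρ ^ s * B.card) :
    (ρ * A.card) ^ s / (3 * (s.factorial : ℝ)) ≤
      (((A.powersetCard s).filter fun S =>
        ρ ^ s * B.card / 3 ≤
          ((B.filter fun b => ∀ a ∈ S, (a, b) ∈ G).card : ℝ)).card : ℝ) :=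
  stmt_1_general A B G hG ρ he s hbig hB
end

section
/- Let r, s, t be positive integers and let 𝒢 be an r-uniform hypergraph that is K_{s,t}^{(r)}-free. Then for any s-set S of vertices, the common link CN(S) (the set of (r−1)-sets forming an edge with every vertex of S) has a vertex cover of size less than rt; in particular, every minimum vertex cover of CN(S) has fewer than rt vertices. -/
open Finset
open scoped Classical

noncomputable section

variable {V : Type}

/-- Number of edges of the hypergraph `G` containing the vertex set `A`. -/
def degSet (G : Finset (Finset V)) (A : Finset V) : ℕ :=
  (G.filter fun e => A ⊆ e).card

/-- The neighborhood of an `(r-1)`-tuple `T`: vertices completing `T` to an edge. -/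
def linkN [Fintype V] (G : Finset (Finset V)) (T : Finset V) : Finset V :=
  Finset.univ.filter fun v => v ∉ T ∧ insert v T ∈ G

/-- Common link `CN_G(S)`: the `(r-1)`-sets forming an edge with every vertex of `S`. -/
def CN (r : ℕ) [Fintype V] (G : Finset (Finset V)) (S : Finset V) : Finset (Finset V) :=
  Finset.univ.filter fun T : Finset V =>
    T.card = r - 1 ∧ ∀ v ∈ S, v ∉ T ∧ insert v T ∈ G

/-- `cd_G(S|u)`: number of members of `CN_G(S)` containing `u`. -/
def cdOn (r : ℕ) [Fintype V] (G : Finset (Finset V)) (S : Finset V) (u : V) : ℕ :=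
  ((CN r G S).filter fun T => u ∈ T).card

/-- `C` is a vertex cover of the set family `E`. -/
def IsVertexCover (C : Finset V) (E : Finset (Finset V)) : Prop :=
  ∀ T ∈ E, ∃ v ∈ C, v ∈ T

/-- `G` contains no copy of `K_{s,t}^{(r)}`. -/
def KstFree (r s t : ℕ) (G : Finset (Finset V)) : Prop :=
  ¬ ∃ (X : Fin t → Finset V) (Y : Finset V),
      (∀ i, (X i).card = r - 1) ∧ Y.card = s ∧
      (∀ i j, i ≠ j → Disjoint (X i) (X j)) ∧
      (∀ i, Disjoint (X i) Y) ∧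
      ∀ i, ∀ y ∈ Y, insert y (X i) ∈ G

/-- `G` is a balanced `r`-partite `r`-uniform hypergraph with parts `parts` of size `n`. -/
def IsPartite (r n : ℕ) (parts : Fin r → Finset V) (G : Finset (Finset V)) : Prop :=
  (∀ i j, i ≠ j → Disjoint (parts i) (parts j)) ∧
  (∀ v : V, ∃ i, v ∈ parts i) ∧
  (∀ i, (parts i).card = n) ∧
  ∀ e ∈ G, ∀ i, (e ∩ parts i).card = 1

/-- `(ε, α)`-regularity in the sense of the paper. -/
def RegularHG (r s n : ℕ) (parts : Fin r → Finset V) (G : Finset (Finset V)) (ε α : ℝ) : Prop :=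
  (n : ℝ) ^ ((r : ℝ) - 1 / ((s : ℝ) - 1) - ε) ≤ (G.card : ℝ) ∧
  ∀ i : Fin r, ∃ Δ : ℝ,
    (n : ℝ) ^ (1 - 1 / ((s : ℝ) - 1) - ε) ≤ Δ ∧
    Δ ≤ (n : ℝ) ^ (1 - 1 / ((s : ℝ) - 1) + ε) ∧
    ∀ T : Finset V, T.card = r - 1 → Disjoint T (parts i) → 1 ≤ degSet G T →
      Δ / α ≤ (degSet G T : ℝ) ∧ (degSet G T : ℝ) ≤ Δ

/-- The pair `(T; v)` is `δ`-dense on `u` in `G`. -/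
def DenseOn (r s n : ℕ) [Fintype V] (G : Finset (Finset V)) (T : Finset V) (v u : V)
    (δ : ℝ) : Prop :=
  (degSet G T : ℝ) ^ (s - 1) / (r : ℝ) ≤
    ((((linkN G T).powersetCard s).filter fun S =>
      v ∈ S ∧ (n : ℝ) ^ ((r : ℝ) - 2 - 1 / ((s : ℝ) - 1) - δ) ≤ (cdOn r G S u : ℝ)).card : ℝ)

/-- The relation `V_i →_δ^{H,G} V_j`. -/
def Arrow (r s n : ℕ) [Fintype V] (parts : Fin r → Finset V) (H G : Finset (Finset V))
    (i j : Fin r) (δ : ℝ) : Prop :=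
  ∀ T : Finset V, T.card = r - 1 → Disjoint T (parts j) → 1 ≤ degSet H T →
    ∀ v ∈ linkN H T, ∀ u ∈ T ∩ parts i, DenseOn r s n G T v u δ
/-!
A maximal family `F` of pairwise disjoint members of `CN(S)` has fewer than `t` members, since
`t` of them together with `S` would span a copy of `K_{s,t}^{(r)}`. By maximality every member
of `CN(S)` meets some member of `F`, so `⋃ F` is a vertex cover with at most `(t - 1)(r - 1)`
vertices.
-/

section VertexCover

variable {E : Finset (Finset V)} {t k : ℕ}

lemma exists_maximal_pairwiseDisjoint_subset (E : Finset (Finset V)) :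
    ∃ F ⊆ E, (F : Set (Finset V)).PairwiseDisjoint id ∧
      ∀ T ∈ E, (∀ T' ∈ F, Disjoint T T') → T ∈ F := by
  set D := E.powerset.filter fun F : Finset (Finset V) => (F : Set (Finset V)).PairwiseDisjoint id
  obtain ⟨F, hF, hmax⟩ := D.exists_max_image card ⟨∅, by simp [D]⟩
  rw [mem_filter, mem_powerset] at hF
  refine ⟨F, hF.1, hF.2, fun T hT hdisj => ?_⟩
  by_contra hTF
  have hins : insert T F ∈ D := by
    rw [mem_filter, mem_powerset, coe_insert, Set.pairwiseDisjoint_insert]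
    exact ⟨insert_subset hT hF.1, hF.2, fun T' hT' _ => hdisj T' hT'⟩
  have := hmax _ hins
  rw [card_insert_of_notMem hTF] at this
  omega

lemma isVertexCover_biUnion_of_maximal {F : Finset (Finset V)} (hempty : ∅ ∉ E)
    (hmax : ∀ T ∈ E, (∀ T' ∈ F, Disjoint T T') → T ∈ F) :
    IsVertexCover (F.biUnion id) E := by
  intro T hT
  by_contra! hmiss
  have hdisj : ∀ T' ∈ F, Disjoint T T' := fun T' hT' =>
    disjoint_left.2 fun v hvT hvT' => hmiss v (mem_biUnion.2 ⟨T', hT', hvT'⟩) hvT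
  have hTempty : T = ∅ := disjoint_self.1 (hdisj T (hmax T hT hdisj))
  exact hempty (hTempty ▸ hT)

variable (hmatch : ∀ X : Fin t → Finset V, (∀ i, X i ∈ E) →
  ¬ Pairwise fun i j => Disjoint (X i) (X j))
include hmatch

lemma pos_of_forall_not_pairwise_disjoint : 0 < t := Nat.pos_of_ne_zero fun ht => by
  subst ht
  exact hmatch Fin.elim0 (fun i => i.elim0) fun i => i.elim0

lemma empty_notMem_of_forall_not_pairwise_disjoint : ∅ ∉ E := fun hE =>
  hmatch (fun _ => ∅) (fun _ => hE) fun _ _ _ => disjoint_empty_left _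

lemma card_lt_of_pairwiseDisjoint_subset {F : Finset (Finset V)} (hFE : F ⊆ E)
    (hF : (F : Set (Finset V)).PairwiseDisjoint id) : F.card < t := by
  by_contra! htF
  obtain ⟨e⟩ : Nonempty (Fin t ↪ F) :=
    Function.Embedding.nonempty_of_card_le (by simpa using htF)
  refine hmatch (fun i => e i) (fun i => hFE (e i).2) fun i j hij => ?_
  exact hF (e i).2 (e j).2 fun h => hij (e.injective (Subtype.ext h))

lemma exists_isVertexCover_card_le (hcard : ∀ T ∈ E, T.card ≤ k) :
    ∃ C, IsVertexCover C E ∧ C.card ≤ (t - 1) * k := by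
  obtain ⟨F, hFE, hF, hmax⟩ := exists_maximal_pairwiseDisjoint_subset E
  refine ⟨F.biUnion id,
    isVertexCover_biUnion_of_maximal (empty_notMem_of_forall_not_pairwise_disjoint hmatch) hmax, ?_⟩
  have hFt := card_lt_of_pairwiseDisjoint_subset hmatch hFE hF
  calc (F.biUnion id).card ≤ ∑ T ∈ F, T.card := card_biUnion_le
    _ ≤ F.card * k := sum_le_card_nsmul _ _ _ fun T hT => hcard T (hFE hT)
    _ ≤ (t - 1) * k := Nat.mul_le_mul_right _ (by omega)

end VertexCover

lemma KstFree.not_pairwise_disjoint_CN {r s t : ℕ} [Fintype V] {G : Finset (Finset V)}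
    (hfree : KstFree r s t G) {S : Finset V} (hS : S.card = s) (X : Fin t → Finset V)
    (hX : ∀ i, X i ∈ CN r G S) : ¬ Pairwise fun i j => Disjoint (X i) (X j) := fun hdisj => by
  simp only [CN, mem_filter, mem_univ, true_and] at hX
  exact hfree ⟨X, S, fun i => (hX i).1, hS, fun _ _ hij => hdisj hij,
    fun i => disjoint_right.2 fun v hv => ((hX i).2 v hv).1, fun i y hy => ((hX i).2 y hy).2⟩

theorem stmt_2_general {V : Type} [Fintype V] (r s t : ℕ) (hr : 1 ≤ r)
    (G : Finset (Finset V)) (hfree : KstFree r s t G)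
    (S : Finset V) (hS : S.card = s) :
    (∃ C : Finset V, IsVertexCover C (CN r G S) ∧ C.card < r * t) ∧
    ∀ C : Finset V, IsVertexCover C (CN r G S) →
      (∀ C' : Finset V, IsVertexCover C' (CN r G S) → C.card ≤ C'.card) →
      C.card < r * t := by
  have hmatch := KstFree.not_pairwise_disjoint_CN hfree hS
  have ht := pos_of_forall_not_pairwise_disjoint hmatch
  obtain ⟨C, hC, hCcard⟩ := exists_isVertexCover_card_le hmatch (k := r - 1) fun T hT => by
    simp only [CN, mem_filter] at hT
    exact hT.2.1.le
  have hlt : (t - 1) * (r - 1) < r * t :=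
    calc (t - 1) * (r - 1) ≤ (t - 1) * r := Nat.mul_le_mul_left _ (Nat.sub_le r 1)
      _ < t * r := Nat.mul_lt_mul_of_pos_right (by omega) hr
      _ = r * t := mul_comm _ _
  exact ⟨⟨C, hC, by omega⟩, fun C₀ _ hmin => (hmin C hC).trans_lt (by omega)⟩

theorem stmt_2 {V : Type} [Fintype V] (r s t : ℕ) (hr : 1 ≤ r) (hs : 1 ≤ s) (ht : 1 ≤ t)
    (G : Finset (Finset V)) (hunif : ∀ e ∈ G, e.card = r) (hfree : KstFree r s t G)
    (S : Finset V) (hS : S.card = s) :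
    (∃ C : Finset V, IsVertexCover C (CN r G S) ∧ C.card < r * t) ∧
    ∀ C : Finset V, IsVertexCover C (CN r G S) →
      (∀ C' : Finset V, IsVertexCover C' (CN r G S) → C.card ≤ C'.card) →
      C.card < r * t :=
  stmt_2_general r s t hr G hfree S hS

end
end

section
/- Let 𝒢 be a K_{s,t}^{(r)}-free r-uniform balanced r-partite hypergraph on rn vertices, and suppose every (r−1)-set lies in at most Δ edges. Then for every s-set S of vertices, the codegree cd_𝒢(S) = |CN_𝒢(S)| is at most rt·Δ·n^{r−3}. -/
open Finset
open scoped Classical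

noncomputable section

variable {V : Type}

/-!
Cover `CN(S)` by few vertices and bound each `cd(S|u)` by a pair degree. Since `𝒢` is
`K_{s,t}^{(r)}`-free, `CN(S)` contains no `t` pairwise disjoint `(r-1)`-sets, so greedily taking
disjoint members gives a vertex cover of `CN(S)` of fewer than `rt` vertices. For a cover vertex
`u` and any `v ∈ S`, the map `T ↦ T ∪ {v}` embeds the members of `CN(S)` through `u` into the
edges through `{u, v}`. Finally, splitting edges along a part that a set `A` misses shows that
`A` lies in at most `Δ n^{r-1-|A|}` edges, which is `Δ n^{r-3}` for a pair.
-/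

open Function

theorem exists_isVertexCover_card_le_mul {m : ℕ} :
    ∀ {t : ℕ} {F : Finset (Finset V)}, (∀ T ∈ F, T.card ≤ m) →
      (¬ ∃ X : Fin t → Finset V, (∀ i, X i ∈ F) ∧ Pairwise (Disjoint on X)) →
      ∃ C : Finset V, IsVertexCover C F ∧ C.card ≤ t * m
  | 0, _, _, hF => (hF ⟨Fin.elim0, nofun, nofun⟩).elim
  | t + 1, F, hm, hF => by
    rcases F.eq_empty_or_nonempty with rfl | ⟨T₀, hT₀⟩
    · exact ⟨∅, by simp [IsVertexCover], by simp⟩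
    obtain ⟨C, hC, hCcard⟩ := exists_isVertexCover_card_le_mul (t := t)
      (F := F.filter (Disjoint · T₀)) (fun T hT => hm T (mem_filter.1 hT).1) (by
        rintro ⟨X, hXF, hX⟩
        refine hF ⟨Fin.cons T₀ X, Fin.cases hT₀ fun i => (mem_filter.1 (hXF i)).1, ?_⟩
        rw [pairwise_fin_succ_iff]
        simp only [onFun, Fin.cons_zero, Fin.cons_succ]
        exact ⟨fun i => (mem_filter.1 (hXF i)).2, fun i => (mem_filter.1 (hXF i)).2.symm, hX⟩)
    refine ⟨C ∪ T₀, fun T hT => ?_, ?_⟩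
    · by_cases hd : Disjoint T T₀
      · obtain ⟨x, hxC, hxT⟩ := hC T (mem_filter.2 ⟨hT, hd⟩)
        exact ⟨x, mem_union_left _ hxC, hxT⟩
      · obtain ⟨x, hxT, hx₀⟩ := not_disjoint_iff.1 hd
        exact ⟨x, mem_union_right _ hx₀, hxT⟩
    · calc (C ∪ T₀).card ≤ C.card + T₀.card := card_union_le _ _
        _ ≤ t * m + m := add_le_add hCcard (hm T₀ hT₀)
        _ = (t + 1) * m := by ring

theorem IsVertexCover.card_le_sum_card_filter_mem {C : Finset V} {F : Finset (Finset V)}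
    (hC : IsVertexCover C F) : F.card ≤ ∑ u ∈ C, (F.filter (u ∈ ·)).card :=
  calc F.card ≤ (C.biUnion fun u => F.filter (u ∈ ·)).card := card_le_card fun T hT => by
        obtain ⟨u, hu, huT⟩ := hC T hT
        exact mem_biUnion.2 ⟨u, hu, mem_filter.2 ⟨hT, huT⟩⟩
    _ ≤ ∑ u ∈ C, (F.filter (u ∈ ·)).card := card_biUnion_le

theorem exists_disjoint_of_card_lt {r : ℕ} {parts : Fin r → Finset V}
    (hparts : Pairwise (Disjoint on parts)) {A : Finset V} (hA : A.card < r) :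
    ∃ i, Disjoint A (parts i) := by
  by_contra! hmeet
  choose f hfA hfparts using fun i => not_disjoint_iff.1 (hmeet i)
  have hf : Set.InjOn f (univ : Finset (Fin r)) := fun i _ j _ hij =>
    by_contra fun hne => disjoint_left.1 (hparts hne) (hfparts i) (hij ▸ hfparts j)
  have := card_le_card_of_injOn f (fun i _ => hfA i) hf
  simp only [card_univ, Fintype.card_fin] at this
  omega

theorem degSet_le_sum_degSet_insert {G : Finset (Finset V)} {P : Finset V}
    (hG : ∀ e ∈ G, (e ∩ P).card = 1) (A : Finset V) :
    degSet G A ≤ ∑ x ∈ P, degSet G (insert x A) :=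
  calc degSet G A ≤ (P.biUnion fun x => G.filter (insert x A ⊆ ·)).card := by
        refine card_le_card fun e he => ?_
        obtain ⟨heG, hAe⟩ := mem_filter.1 he
        obtain ⟨x, hx⟩ := card_eq_one.1 (hG e heG)
        have hxeP : x ∈ e ∩ P := hx ▸ mem_singleton_self x
        exact mem_biUnion.2 ⟨x, (mem_inter.1 hxeP).2,
          mem_filter.2 ⟨heG, insert_subset (mem_inter.1 hxeP).1 hAe⟩⟩
    _ ≤ ∑ x ∈ P, degSet G (insert x A) := card_biUnion_le

theorem IsPartite.degSet_le {r n Δ : ℕ} {parts : Fin r → Finset V} {G : Finset (Finset V)}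
    (hpart : IsPartite r n parts G) (hΔ : ∀ T : Finset V, T.card = r - 1 → degSet G T ≤ Δ) :
    ∀ (k : ℕ) (A : Finset V), A.card + k = r - 1 → degSet G A ≤ Δ * n ^ k
  | 0, A, hA => by simpa using hΔ A hA
  | k + 1, A, hA => by
    obtain ⟨i, hi⟩ := exists_disjoint_of_card_lt (fun i j h => hpart.1 i j h)
      (show A.card < r by omega)
    calc degSet G A ≤ ∑ x ∈ parts i, degSet G (insert x A) :=
          degSet_le_sum_degSet_insert (fun e he => hpart.2.2.2 e he i) A
      _ ≤ ∑ _x ∈ parts i, Δ * n ^ k := sum_le_sum fun x hx => hpart.degSet_le hΔ k _ (by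
          rw [card_insert_of_notMem (disjoint_right.1 hi hx)]; omega)
      _ = Δ * n ^ (k + 1) := by rw [sum_const, hpart.2.2.1 i, smul_eq_mul]; ring

section CommonLink

variable [Fintype V] {r : ℕ} {G : Finset (Finset V)} {S : Finset V}

theorem mem_CN {T : Finset V} :
    T ∈ CN r G S ↔ T.card = r - 1 ∧ ∀ v ∈ S, v ∉ T ∧ insert v T ∈ G := by
  simp [CN]

theorem KstFree.not_exists_pairwise_disjoint_mem_CN {s t : ℕ} (hfree : KstFree r s t G)
    (hS : S.card = s) :
    ¬ ∃ X : Fin t → Finset V, (∀ i, X i ∈ CN r G S) ∧ Pairwise (Disjoint on X) := by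
  rintro ⟨X, hXCN, hX⟩
  refine hfree ⟨X, S, fun i => (mem_CN.1 (hXCN i)).1, hS, fun i j hij => hX hij,
    fun i => disjoint_right.2 fun y hy => ((mem_CN.1 (hXCN i)).2 y hy).1,
    fun i y hy => ((mem_CN.1 (hXCN i)).2 y hy).2⟩

theorem cdOn_eq_zero_of_mem {v : V} (hv : v ∈ S) : cdOn r G S v = 0 :=
  card_eq_zero.2 <| filter_eq_empty_iff.2 fun _ hT => ((mem_CN.1 hT).2 v hv).1

theorem cdOn_le_degSet_pair {v : V} (hv : v ∈ S) (u : V) : cdOn r G S u ≤ degSet G {u, v} := by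
  refine card_le_card_of_injOn (insert v) (fun T hT => ?_) fun T₁ hT₁ T₂ hT₂ h => ?_
  · obtain ⟨hTCN, huT⟩ := mem_filter.1 hT
    refine mem_filter.2 ⟨((mem_CN.1 hTCN).2 v hv).2, ?_⟩
    exact insert_subset (mem_insert_of_mem huT) (singleton_subset_iff.2 (mem_insert_self v T))
  · have hv₁ := ((mem_CN.1 (mem_filter.1 hT₁).1).2 v hv).1
    have hv₂ := ((mem_CN.1 (mem_filter.1 hT₂).1).2 v hv).1
    rw [← erase_insert hv₁, ← erase_insert hv₂]
    exact congrArg (·.erase v) h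

theorem IsPartite.cdOn_le {n Δ : ℕ} {parts : Fin r → Finset V} (hpart : IsPartite r n parts G)
    (hΔ : ∀ T : Finset V, T.card = r - 1 → degSet G T ≤ Δ) (hr : 3 ≤ r) {v : V} (hv : v ∈ S)
    (u : V) : cdOn r G S u ≤ Δ * n ^ (r - 3) := by
  rcases eq_or_ne u v with rfl | huv
  · simp [cdOn_eq_zero_of_mem hv]
  · exact (cdOn_le_degSet_pair hv u).trans
      (hpart.degSet_le hΔ _ _ (by rw [card_pair huv]; omega))

end CommonLink

theorem stmt_5_general {V : Type} [Fintype V] (r s t n Δ : ℕ) (hr : 3 ≤ r) (hs : 1 ≤ s)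
    (parts : Fin r → Finset V) (G : Finset (Finset V)) (hpart : IsPartite r n parts G)
    (hfree : KstFree r s t G)
    (hΔ : ∀ T : Finset V, T.card = r - 1 → degSet G T ≤ Δ)
    (S : Finset V) (hS : S.card = s) :
    (CN r G S).card ≤ r * t * Δ * n ^ (r - 3) := by
  obtain ⟨v, hv⟩ : S.Nonempty := card_pos.1 (by omega)
  obtain ⟨C, hC, hCcard⟩ := exists_isVertexCover_card_le_mul (m := r - 1)
    (fun T hT => (mem_CN.1 hT).1.le) (hfree.not_exists_pairwise_disjoint_mem_CN hS)
  calc (CN r G S).card ≤ ∑ u ∈ C, cdOn r G S u := hC.card_le_sum_card_filter_mem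
    _ ≤ ∑ _u ∈ C, Δ * n ^ (r - 3) := sum_le_sum fun u _ => hpart.cdOn_le hΔ hr hv u
    _ = C.card * (Δ * n ^ (r - 3)) := by rw [sum_const, smul_eq_mul]
    _ ≤ t * r * (Δ * n ^ (r - 3)) := by gcongr; exact hCcard.trans (by gcongr; omega)
    _ = r * t * Δ * n ^ (r - 3) := by ring

theorem stmt_5 {V : Type} [Fintype V] (r s t n Δ : ℕ) (hr : 3 ≤ r) (hs : 1 ≤ s) (ht : 1 ≤ t)
    (parts : Fin r → Finset V) (G : Finset (Finset V)) (hpart : IsPartite r n parts G)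
    (hfree : KstFree r s t G)
    (hΔ : ∀ T : Finset V, T.card = r - 1 → degSet G T ≤ Δ)
    (S : Finset V) (hS : S.card = s) :
    (CN r G S).card ≤ r * t * Δ * n ^ (r - 3) :=
  stmt_5_general r s t n Δ hr hs parts G hpart hfree hΔ S hS

end
end

section
/- Let 𝒢 be an (ε, α)-regular K_{s,t}^{(r)}-free r-uniform balanced r-partite hypergraph on rn vertices, let c > 0, and let 𝒢′ ⊆ 𝒢 be a subgraph with e(𝒢′) ≥ e(𝒢)/c. Then 𝒢′ contains an (ε + log_n(2c), 2αcr)-regular subgraph ℋ. -/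
/-!
Prune `𝒢′` by repeatedly deleting all edges through an `(r - 1)`-set `T` avoiding some part whose
degree is positive but below `d_𝒢(T) / (2cr)`. Every edge of the `r`-partite `𝒢` contains at most
`r` such sets (the edge minus one part), so double counting bounds the loss by
`r e(𝒢) / (2cr) = e(𝒢) / (2c)` and `e(ℋ) ≥ e(𝒢) / (2c)`. The surviving degrees are within a factor
`2cr` of those in `𝒢`, so the constants `Δ_i` of `𝒢` witness the regularity of `ℋ`, with `α`
multiplied by `2cr` and `ε` increased by `log_n (2c)` to absorb the edge loss.
-/

open Finset
open scoped Classical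

noncomputable section

variable {V : Type}

theorem degSet_mono {F F' : Finset (Finset V)} (h : F ⊆ F') (T : Finset V) :
    degSet F T ≤ degSet F' T :=
  card_le_card (filter_subset_filter _ h)

theorem degSet_filter_not_subset (F : Finset (Finset V)) (T : Finset V) :
    degSet (F.filter fun e => ¬T ⊆ e) T = 0 := by
  simp [degSet, filter_filter]

theorem degSet_add_card_filter_not_subset (F : Finset (Finset V)) (T : Finset V) :
    degSet F T + (F.filter fun e => ¬T ⊆ e).card = F.card :=
  card_filter_add_card_filter_not _

/-- Repeatedly delete all edges through some `T ∈ P` of positive degree below `θ T`. This costs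
fewer than `θ T` edges and leaves `T` of degree `0` for good, so each `T` is used at most once. -/
theorem exists_subset_threshold_le_degSet (θ : Finset V → ℝ) (P : Finset (Finset V))
    (hθ : ∀ T ∈ P, 0 ≤ θ T) (F : Finset (Finset V)) :
    ∃ K ⊆ F, (∀ T ∈ P, 1 ≤ degSet K T → θ T ≤ degSet K T) ∧
      (F.card : ℝ) ≤ K.card + ∑ T ∈ P, θ T := by
  induction P using Finset.strongInduction generalizing F with
  | H P ih =>
    by_cases hF : ∀ T ∈ P, 1 ≤ degSet F T → θ T ≤ degSet F T
    · exact ⟨F, subset_rfl, hF, le_add_of_nonneg_right (sum_nonneg hθ)⟩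
    push Not at hF
    obtain ⟨T, hTP, -, hlow⟩ := hF
    set F' := F.filter fun e => ¬T ⊆ e
    obtain ⟨K, hKF', hK, hcard⟩ :=
      ih (P.erase T) (erase_ssubset hTP) (fun T' hT' => hθ T' (mem_of_mem_erase hT')) F'
    refine ⟨K, hKF'.trans (filter_subset _ _), fun T' hT' hdeg => ?_, ?_⟩
    · obtain rfl | hne := eq_or_ne T' T
      · have := (degSet_mono hKF' T').trans_eq (degSet_filter_not_subset F T')
        omega
      · exact hK T' (mem_erase.2 ⟨hne, hT'⟩) hdeg
    · have hF' : (F.card : ℝ) = degSet F T + F'.card := by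
        exact_mod_cast (degSet_add_card_filter_not_subset F T).symm
      rw [← add_sum_erase P θ hTP]
      linarith

theorem sum_degSet_le_card_mul {𝒯 G : Finset (Finset V)} {m : ℕ}
    (h : ∀ e ∈ G, (𝒯.filter fun T => T ⊆ e).card ≤ m) :
    ∑ T ∈ 𝒯, degSet G T ≤ G.card * m := by
  calc ∑ T ∈ 𝒯, degSet G T = ∑ T ∈ 𝒯, (G.bipartiteAbove (· ⊆ ·) T).card := rfl
    _ = ∑ e ∈ G, (𝒯.bipartiteBelow (· ⊆ ·) e).card :=
      sum_card_bipartiteAbove_eq_sum_card_bipartiteBelow _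
    _ ≤ G.card • m := sum_le_card_nsmul G _ m h

def avoidingTuples [Fintype V] (r : ℕ) (parts : Fin r → Finset V) : Finset (Finset V) :=
  univ.filter fun T => T.card = r - 1 ∧ ∃ i, Disjoint T (parts i)

namespace IsPartite

variable {r n : ℕ} {parts : Fin r → Finset V} {G : Finset (Finset V)}

theorem card_eq (hG : IsPartite r n parts G) {e : Finset V} (he : e ∈ G) : e.card = r := by
  have hcover : univ.biUnion (fun i => e ∩ parts i) = e := by
    ext v
    obtain ⟨i, hi⟩ := hG.2.1 v
    simp only [mem_biUnion, mem_univ, mem_inter, true_and]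
    exact ⟨fun ⟨_, hv, _⟩ => hv, fun hv => ⟨i, hv, hi⟩⟩
  have hdisj : ((univ : Finset (Fin r)) : Set (Fin r)).PairwiseDisjoint fun i => e ∩ parts i :=
    fun i _ j _ hij => (hG.1 i j hij).mono inter_subset_right inter_subset_right
  rw [← hcover, card_biUnion hdisj, sum_congr rfl fun i _ => hG.2.2.2 e he i]
  simp

theorem eq_sdiff_of_subset (hG : IsPartite r n parts G) {e T : Finset V} (he : e ∈ G)
    (hT : T.card = r - 1) {i : Fin r} (hTi : Disjoint T (parts i)) (hTe : T ⊆ e) :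
    T = e \ parts i := by
  have hsdiff := card_inter_add_card_sdiff e (parts i)
  rw [hG.card_eq he, hG.2.2.2 e he i] at hsdiff
  exact eq_of_subset_of_card_le (subset_sdiff.2 ⟨hTe, hTi⟩) (by omega)

theorem sum_degSet_avoidingTuples_le [Fintype V] (hG : IsPartite r n parts G) :
    ∑ T ∈ avoidingTuples r parts, degSet G T ≤ G.card * r := by
  refine sum_degSet_le_card_mul fun e he => ?_
  calc ((avoidingTuples r parts).filter fun T => T ⊆ e).card
      ≤ (univ.image fun i => e \ parts i).card := by
        refine card_le_card fun T hT => ?_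
        simp only [avoidingTuples, mem_filter, mem_univ, true_and] at hT
        obtain ⟨⟨hT, i, hTi⟩, hTe⟩ := hT
        exact mem_image.2 ⟨i, mem_univ i, (hG.eq_sdiff_of_subset he hT hTi hTe).symm⟩
    _ ≤ r := card_image_le.trans (by simp)

end IsPartite

/-- The constants `Δ_i` witnessing the regularity of `G` also witness that of `H`. -/
theorem RegularHG.of_subset {r s n : ℕ} {parts : Fin r → Finset V} {G H : Finset (Finset V)}
    {ε α γ κ : ℝ} (hG : RegularHG r s n parts G ε α) (hn : 1 < n) (hHG : H ⊆ G) (hγ : 0 ≤ γ)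
    (hcard : (G.card : ℝ) ≤ κ * H.card)
    (hdeg : ∀ i T, T.card = r - 1 → Disjoint T (parts i) → 1 ≤ degSet H T →
      degSet G T / γ ≤ degSet H T) :
    RegularHG r s n parts H (ε + Real.logb n κ) (α * γ) := by
  obtain ⟨hGcard, hGdeg⟩ := hG
  have hn' : (1 : ℝ) < n := by exact_mod_cast hn
  have hGpos : (0 : ℝ) < G.card := (Real.rpow_pos_of_pos (by linarith) _).trans_le hGcard
  have hHG' : (H.card : ℝ) ≤ G.card := by exact_mod_cast card_le_card hHG
  have hκH : 0 < κ * H.card := hGpos.trans_le hcard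
  have hH : (0 : ℝ) < H.card :=
    pos_of_mul_pos_right hκH (pos_of_mul_pos_left hκH (by positivity)).le
  have hκ : 1 ≤ κ := le_of_mul_le_mul_right (by linarith) hH
  have hlog : 0 ≤ Real.logb n κ := Real.logb_nonneg hn' hκ
  refine ⟨?_, fun i => ?_⟩
  · calc (n : ℝ) ^ ((r : ℝ) - 1 / ((s : ℝ) - 1) - (ε + Real.logb n κ))
        = (n : ℝ) ^ ((r : ℝ) - 1 / ((s : ℝ) - 1) - ε) / κ := by
          rw [← sub_sub, Real.rpow_sub (by linarith), Real.rpow_logb (by linarith) hn'.ne'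
            (by linarith)]
      _ ≤ G.card / κ := by gcongr
      _ ≤ H.card := by rw [div_le_iff₀ (by linarith)]; linarith
  obtain ⟨Δ, hΔlo, hΔhi, hΔ⟩ := hGdeg i
  refine ⟨Δ, ?_, ?_, fun T hT hTi hTH => ?_⟩
  · exact (Real.rpow_le_rpow_of_exponent_le hn'.le (by linarith)).trans hΔlo
  · exact hΔhi.trans (Real.rpow_le_rpow_of_exponent_le hn'.le (by linarith))
  obtain ⟨hΔG, hGΔ⟩ := hΔ T hT hTi (hTH.trans (degSet_mono hHG T))
  have hHG_T : (degSet H T : ℝ) ≤ degSet G T := by exact_mod_cast degSet_mono hHG T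
  refine ⟨?_, hHG_T.trans hGΔ⟩
  calc Δ / (α * γ) = Δ / α / γ := by rw [div_div]
    _ ≤ degSet G T / γ := div_le_div_of_nonneg_right hΔG hγ
    _ ≤ degSet H T := hdeg i T hT hTi hTH

theorem stmt_10_general {V : Type} [Fintype V] (r s n : ℕ)
    (hn : 2 ≤ n) (ε α c : ℝ) (hc : 0 < c)
    (parts : Fin r → Finset V) (G G' : Finset (Finset V))
    (hpart : IsPartite r n parts G) (hreg : RegularHG r s n parts G ε α)
    (hsub : G' ⊆ G)
    (he : (G.card : ℝ) / c ≤ (G'.card : ℝ)) :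
    ∃ H ⊆ G', RegularHG r s n parts H (ε + Real.logb (n : ℝ) (2 * c))
      (2 * α * c * (r : ℝ)) := by
  obtain ⟨H, hHG', hHdeg, hlost⟩ := exists_subset_threshold_le_degSet
    (fun T => degSet G T / (2 * c * r)) (avoidingTuples r parts) (fun T _ => by positivity) G'
  have hsum : ∑ T ∈ avoidingTuples r parts, (degSet G T : ℝ) / (2 * c * r) ≤ G.card / (2 * c) :=
    calc ∑ T ∈ avoidingTuples r parts, (degSet G T : ℝ) / (2 * c * r)
        ≤ G.card * r / (2 * c * r) := by
          rw [← sum_div]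
          gcongr
          exact_mod_cast hpart.sum_degSet_avoidingTuples_le
      _ = G.card / (2 * c) * (r / r) := by ring
      _ ≤ G.card / (2 * c) := mul_le_of_le_one_right (by positivity) (div_self_le_one _)
  refine ⟨H, hHG', ?_⟩
  rw [show 2 * α * c * (r : ℝ) = α * (2 * c * r) by ring]
  refine hreg.of_subset (by omega) (hHG'.trans hsub) (by positivity) ?_ fun i T hT hTi =>
    hHdeg T (mem_filter.2 ⟨mem_univ T, hT, i, hTi⟩)
  have hhalf : (G.card : ℝ) / c = G.card / (2 * c) + G.card / (2 * c) := by field_simp; ring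
  have hH : (G.card : ℝ) / (2 * c) ≤ H.card := by linarith
  rwa [div_le_iff₀' (by positivity)] at hH

theorem stmt_10 {V : Type} [Fintype V] (r s t n : ℕ) (hr : 3 ≤ r) (hs : 3 ≤ s) (ht : 1 ≤ t)
    (hn : 2 ≤ n) (ε α c : ℝ) (hε : 0 < ε) (hα : 0 < α) (hc : 0 < c)
    (parts : Fin r → Finset V) (G G' : Finset (Finset V))
    (hpart : IsPartite r n parts G) (hreg : RegularHG r s n parts G ε α)
    (hfree : KstFree r s t G) (hsub : G' ⊆ G)
    (he : (G.card : ℝ) / c ≤ (G'.card : ℝ)) :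
    ∃ H ⊆ G', RegularHG r s n parts H (ε + Real.logb (n : ℝ) (2 * c))
      (2 * α * c * (r : ℝ)) :=
  stmt_10_general r s n hn ε α c hc parts G G' hpart hreg hsub he

end
end

section
/- Under the hypotheses of the previous setting (𝒢 (ε,α)-regular K_{s,t}^{(r)}-free, 6(s+1)(ε+δ) ≤ 1, α = o(n^ε), T an (r−1)-tuple avoiding V_2 with T ∩ V_1 = {v_1}, X ⊆ N_𝒢(T) nonempty with each (T;v), v ∈ X, δ-dense on v_1): for any j ∉ {1,2} there exist Y ⊆ N_𝒢(T), Z ⊆ V_j, and an (r−3)-tuple R ⊆ V(𝒢) \ (V_1 ∪ V_2 ∪ V_j) such that |Y| ≥ n^{1−1/(s−1)−2ε−δ}/(2rα), n^{1−1/(s−1)−δ} ≤ |Z| ≤ n^{1−1/(s−1)+ε}, and for every y ∈ Y, |N_𝒢({v_1,y} ∪ R) ∩ Z| ≥ n^{1−1/(s−1)−ε−2δ}/2. -/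
open Finset
open scoped Classical

noncomputable section

variable {V : Type}

set_option maxHeartbeats 3000000 in
theorem stmt_14 (r s t : ℕ) (hr : 3 ≤ r) (hs : 3 ≤ s) (ht : 1 ≤ t)
    (ε δ : ℝ) (hε : 0 < ε) (hδ : 0 < δ)
    (h1 : 6 * ((s : ℝ) + 1) * (ε + δ) ≤ 1)
    (α : ℕ → ℝ) (hα : α =o[Filter.atTop] fun n => (n : ℝ) ^ ε) :
    ∃ n₀ : ℕ, ∀ n ≥ n₀, ∀ (V : Type) [Fintype V],
      ∀ (parts : Fin r → Finset V) (G : Finset (Finset V)),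
        IsPartite r n parts G → RegularHG r s n parts G ε (α n) → KstFree r s t G →
        ∀ (i₁ i₂ : Fin r), i₁ ≠ i₂ →
        ∀ T : Finset V, T.card = r - 1 → Disjoint T (parts i₂) → 1 ≤ degSet G T →
        ∀ v₁ ∈ T, v₁ ∈ parts i₁ →
        ∀ X ⊆ linkN G T, (∀ v ∈ X, DenseOn r s n G T v v₁ δ) → X.Nonempty →
        ∀ j : Fin r, j ≠ i₁ → j ≠ i₂ →
        ∃ Y ⊆ linkN G T, ∃ Z ⊆ parts j, ∃ R : Finset V,
          R.card = r - 3 ∧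
          (∀ u ∈ R, u ∉ parts i₁ ∧ u ∉ parts i₂ ∧ u ∉ parts j) ∧
          (n : ℝ) ^ (1 - 1 / ((s : ℝ) - 1) - 2 * ε - δ) / (2 * (r : ℝ) * α n) ≤ (Y.card : ℝ) ∧
          (n : ℝ) ^ (1 - 1 / ((s : ℝ) - 1) - δ) ≤ (Z.card : ℝ) ∧
          (Z.card : ℝ) ≤ (n : ℝ) ^ (1 - 1 / ((s : ℝ) - 1) + ε) ∧
          ∀ y ∈ Y,
            (n : ℝ) ^ (1 - 1 / ((s : ℝ) - 1) - ε - 2 * δ) / 2 ≤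
              ((linkN G (insert v₁ (insert y R)) ∩ Z).card : ℝ) := by
  classical
  refine ⟨1, ?_⟩
  intro n hn V _ parts G hpart hreg hfree i₁ i₂ h12 T hTcard hTdisj hTdeg v₁ hv₁T hv₁p X hXsub
    hXdense hXne j hj1 hj2
  obtain ⟨hpdisj, hpcover, hpcard, hpedge⟩ := hpart
  obtain ⟨v, hvX⟩ := hXne
  have hvlink : v ∈ linkN G T := hXsub hvX
  have hn1 : (1:ℝ) ≤ (n:ℝ) := by exact_mod_cast hn
  have hnpos : (0:ℝ) < (n:ℝ) := lt_of_lt_of_le one_pos hn1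
  have hs2 : (2:ℝ) ≤ (s:ℝ) - 1 := by
    have : (3:ℝ) ≤ (s:ℝ) := by exact_mod_cast hs
    linarith
  have hrR : (3:ℝ) ≤ (r:ℝ) := by exact_mod_cast hr
  have hrpos : (0:ℝ) < (r:ℝ) := by linarith
  have huniq : ∀ (x : V) (k k' : Fin r), x ∈ parts k → x ∈ parts k' → k = k' := by
    intro x k k' h h'
    by_contra hkk
    exact (Finset.disjoint_left.mp (hpdisj k k' hkk) h) h'
  have hlinkpart : ∀ (A : Finset V) (k : Fin r), Disjoint A (parts k) →
      ∀ w ∈ linkN G A, w ∈ parts k := by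
    intro A k hdisj w hw
    simp only [linkN, Finset.mem_filter, Finset.mem_univ, true_and] at hw
    obtain ⟨hwA, hwG⟩ := hw
    obtain ⟨x, hx⟩ := Finset.card_eq_one.mp (hpedge _ hwG k)
    have hxmem : x ∈ insert w A ∩ parts k := hx ▸ Finset.mem_singleton_self x
    simp only [Finset.mem_inter, Finset.mem_insert] at hxmem
    obtain ⟨hx1 | hx1, hx2⟩ := hxmem
    · exact hx1 ▸ hx2
    · exact absurd hx2 (Finset.disjoint_left.mp hdisj hx1)
  have hlinkcard : ∀ A : Finset V, (linkN G A).card ≤ degSet G A := by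
    intro A
    apply Finset.card_le_card_of_injOn (fun w => insert w A)
    · intro w hw
      simp only [linkN, Finset.mem_coe, Finset.mem_filter, Finset.mem_univ, true_and] at hw
      simp only [degSet, Finset.mem_coe, Finset.mem_filter]
      exact ⟨hw.2, Finset.subset_insert _ _⟩
    · intro a ha b hb hab
      have ha' : a ∉ A := by
        have h0 := ha
        simp only [linkN, Finset.coe_filter, Finset.mem_univ, true_and, Set.mem_setOf_eq] at h0
        exact h0.1
      have h' : insert a A = insert b A := hab
      have hmem : a ∈ insert b A := h' ▸ Finset.mem_insert_self a A
      rcases Finset.mem_insert.mp hmem with h | h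
      · exact h
      · exact absurd h ha'
  have hvp2 : v ∈ parts i₂ := hlinkpart T i₂ hTdisj v hvlink
  have hv1v : v₁ ≠ v := fun h =>
    (Finset.disjoint_left.mp (hpdisj i₁ i₂ h12) hv₁p) (h ▸ hvp2)
  have hCNmem : ∀ (S T' : Finset V), T' ∈ CN r G S →
      T'.card = r - 1 ∧ ∀ u ∈ S, u ∉ T' ∧ insert u T' ∈ G := by
    intro S T' h
    simpa [CN] using h
  -- abbreviations
  set K' : ℝ := (n : ℝ) ^ ((r : ℝ) - 2 - 1 / ((s : ℝ) - 1) - δ) with hK'def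
  set t₀ : ℝ := (n : ℝ) ^ (1 - 1 / ((s : ℝ) - 1) - δ) with ht₀def
  set D : ℝ := (n : ℝ) ^ (1 - 1 / ((s : ℝ) - 1) + ε) with hDdef
  set t₂ : ℝ := (n : ℝ) ^ (1 - 1 / ((s : ℝ) - 1) - ε - 2 * δ) / 2 with ht₂def
  have hdense0 := hXdense v hvX
  unfold DenseOn at hdense0
  rw [← hK'def] at hdense0
  set goodS := ((linkN G T).powersetCard s).filter
      (fun S => v ∈ S ∧ K' ≤ (cdOn r G S v₁ : ℝ)) with hgoodSdef
  have hdeg1 : (1:ℝ) ≤ (degSet G T : ℝ) := by exact_mod_cast hTdeg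
  have hNspos : (0:ℝ) < (degSet G T : ℝ) ^ (s-1) / r := by positivity
  have hgoodSne : goodS.Nonempty := by
    rw [← Finset.card_pos]
    exact_mod_cast lt_of_lt_of_le hNspos hdense0
  have hgoodmem : ∀ S ∈ goodS, S ⊆ linkN G T ∧ S.card = s ∧ v ∈ S ∧
      K' ≤ (cdOn r G S v₁ : ℝ) := by
    intro S hS
    rw [hgoodSdef, Finset.mem_filter, Finset.mem_powersetCard] at hS
    tauto
  -- the structure of members of CN containing v₁
  have hstruct : ∀ S ∈ goodS, ∀ T' ∈ (CN r G S).filter (fun T'' => v₁ ∈ T''),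
      T' ∩ parts i₂ = ∅ ∧ ∀ k, k ≠ i₂ → (T' ∩ parts k).card = 1 := by
    intro S hS T' hT'
    rw [Finset.mem_filter] at hT'
    obtain ⟨hT'CN, hv₁T'⟩ := hT'
    obtain ⟨hT'card, hT'all⟩ := hCNmem S T' hT'CN
    obtain ⟨hSlink, hScard, hvS, -⟩ := hgoodmem S hS
    obtain ⟨hvnT', hvins⟩ := hT'all v hvS
    have hins := hpedge _ hvins
    have hi₂ : T' ∩ parts i₂ = ∅ := by
      obtain ⟨x, hx⟩ := Finset.card_eq_one.mp (hins i₂)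
      have hvx : v ∈ insert v T' ∩ parts i₂ := by
        simp [hvp2]
      rw [hx, Finset.mem_singleton] at hvx
      ext y
      simp only [Finset.mem_inter, Finset.notMem_empty, iff_false, not_and]
      intro hy1 hy2
      have hym : y ∈ insert v T' ∩ parts i₂ := by
        simp [hy1, hy2]
      rw [hx, Finset.mem_singleton] at hym
      subst hym
      rw [← hvx] at hy1
      exact hvnT' hy1
    refine ⟨hi₂, ?_⟩
    intro k hk
    have heq : insert v T' ∩ parts k = T' ∩ parts k := by
      ext y
      simp only [Finset.mem_inter, Finset.mem_insert]
      constructor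
      · rintro ⟨rfl | hy, hyk⟩
        · exact absurd hyk (Finset.disjoint_left.mp (hpdisj i₂ k (fun h => hk h.symm)) hvp2)
        · exact ⟨hy, hyk⟩
      · rintro ⟨hy, hyk⟩
        exact ⟨Or.inr hy, hyk⟩
    rw [← heq]
    exact hins k
  -- pattern map
  set Pk : Fin r → Prop := fun k => k = i₂ ∨ k = j ∨ k = i₁ with hPkdef
  set Kset := Finset.univ.filter (fun k => ¬ Pk k) with hKsetdef
  have hKsetcard : Kset.card = r - 3 := by
    have h3 : (Finset.univ.filter (fun k => Pk k)).card = 3 := by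
      have he : Finset.univ.filter (fun k => Pk k) = {i₂, j, i₁} := by
        ext k
        simp [hPkdef]
      rw [he]
      rw [Finset.card_insert_of_notMem, Finset.card_insert_of_notMem, Finset.card_singleton]
      · simp only [Finset.mem_singleton]
        exact hj1
      · simp only [Finset.mem_insert, Finset.mem_singleton]
        push_neg
        exact ⟨fun h => hj2 h.symm, fun h => h12 h.symm⟩
    have hsum := Finset.card_filter_add_card_filter_not
      (s := (Finset.univ : Finset (Fin r))) (p := fun k => Pk k)
    rw [Finset.card_univ, Fintype.card_fin] at hsum
    rw [hKsetdef]
    omega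
  set ψf : Finset V → Fin r → V := fun T' k =>
    if Pk k then v₁
    else if h : (T' ∩ parts k).Nonempty then h.choose else v₁ with hψfdef
  set target := Fintype.piFinset (fun k => if Pk k then ({v₁} : Finset V) else parts k)
    with htargetdef
  have htargetcard : (target.card : ℝ) ≤ (n:ℝ) ^ ((r:ℝ) - 3) := by
    have h1 : target.card = n ^ (r - 3) := by
      rw [htargetdef, Fintype.card_piFinset]
      calc (∏ k, (if Pk k then ({v₁} : Finset V) else parts k).card)
          = ∏ k, (if Pk k then 1 else n) := by
            apply Finset.prod_congr rfl
            intro k _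
            split <;> simp [hpcard]
        _ = n ^ Kset.card := by
            rw [Finset.prod_ite]
            simp only [Finset.prod_const_one, Finset.prod_const, one_mul, hKsetdef]
        _ = n ^ (r - 3) := by rw [hKsetcard]
    have h2 : ((r - 3 : ℕ) : ℝ) = (r:ℝ) - 3 := by
      have := Nat.cast_sub hr (R := ℝ)
      simpa using this
    rw [h1]
    push_cast
    rw [← Real.rpow_natCast (n:ℝ) (r-3), h2]
  set F := goodS.sigma (fun S => (CN r G S).filter (fun T' => v₁ ∈ T')) with hFdef
  have hFcard : (goodS.card : ℝ) * K' ≤ (F.card : ℝ) := by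
    have h1 : F.card = ∑ S ∈ goodS, ((CN r G S).filter (fun T' => v₁ ∈ T')).card := by
      rw [hFdef, Finset.card_sigma]
    rw [h1]
    push_cast
    calc (goodS.card : ℝ) * K' = ∑ _S ∈ goodS, K' := by
          rw [Finset.sum_const, nsmul_eq_mul]
      _ ≤ ∑ S ∈ goodS, (((CN r G S).filter (fun T' => v₁ ∈ T')).card : ℝ) := by
          apply Finset.sum_le_sum
          intro S hS
          have := (hgoodmem S hS).2.2.2
          simpa [cdOn] using this
  set Ψ : (Σ _ : Finset V, Finset V) → (Fin r → V) := fun p => ψf p.2 with hΨdef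
  have hmaps : ∀ p ∈ F, Ψ p ∈ target := by
    intro p hp
    rw [hFdef, Finset.mem_sigma] at hp
    obtain ⟨hp1, hp2⟩ := hp
    rw [htargetdef, Fintype.mem_piFinset]
    intro k
    by_cases hk : Pk k
    · simp [hΨdef, hψfdef, hk]
    · have hcard1 : (p.2 ∩ parts k).card = 1 :=
        (hstruct _ hp1 _ hp2).2 k (fun h => hk (Or.inl h))
      have hne : (p.2 ∩ parts k).Nonempty := by
        rw [← Finset.card_pos, hcard1]; norm_num
      simp only [hΨdef, hψfdef, if_neg hk]
      rw [dif_pos hne]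
      exact (Finset.mem_inter.mp hne.choose_spec).2
  have htne : target.Nonempty := by
    rw [htargetdef, Fintype.piFinset_nonempty]
    intro k
    by_cases hk : Pk k
    · simp [hk]
    · simp only [if_neg hk]
      rw [← Finset.card_pos, hpcard k]
      omega
  have hnr3pos : (0:ℝ) < (n:ℝ) ^ ((r:ℝ) - 3) := Real.rpow_pos_of_pos hnpos _
  have hpig : ∃ b ∈ target,
      (F.card:ℝ) / (n:ℝ) ^ ((r:ℝ) - 3) ≤ ((F.filter (fun p => Ψ p = b)).card : ℝ) := by
    by_contra hcon
    push_neg at hcon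
    have hlt : ∑ b ∈ target, ((F.filter (fun p => Ψ p = b)).card : ℝ)
        < ∑ _b ∈ target, (F.card:ℝ) / (n:ℝ) ^ ((r:ℝ) - 3) :=
      Finset.sum_lt_sum_of_nonempty htne (fun b hb => hcon b hb)
    have hnat : ∑ b ∈ target, (F.filter (fun p => Ψ p = b)).card = F.card :=
      (Finset.card_eq_sum_card_fiberwise hmaps).symm
    have hsum : ∑ b ∈ target, ((F.filter (fun p => Ψ p = b)).card : ℝ) = (F.card : ℝ) := by
      rw [← Nat.cast_sum, hnat]
    rw [hsum, Finset.sum_const, nsmul_eq_mul] at hlt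
    have hFnn : (0:ℝ) ≤ (F.card:ℝ) / (n:ℝ) ^ ((r:ℝ) - 3) :=
      div_nonneg (Nat.cast_nonneg _) (le_of_lt hnr3pos)
    have hmul : (target.card:ℝ) * ((F.card:ℝ) / (n:ℝ) ^ ((r:ℝ) - 3))
        ≤ (n:ℝ) ^ ((r:ℝ) - 3) * ((F.card:ℝ) / (n:ℝ) ^ ((r:ℝ) - 3)) :=
      mul_le_mul_of_nonneg_right htargetcard hFnn
    rw [mul_div_cancel₀ _ (ne_of_gt hnr3pos)] at hmul
    linarith
  obtain ⟨f, hftarget, hfib⟩ := hpig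
  set fiber := F.filter (fun p => Ψ p = f) with hfiberdef
  have hfparts : ∀ k ∈ Kset, f k ∈ parts k := by
    intro k hk
    rw [hKsetdef, Finset.mem_filter] at hk
    rw [htargetdef, Fintype.mem_piFinset] at hftarget
    have := hftarget k
    rwa [if_neg hk.2] at this
  set Rstar := Kset.image f with hRstardef
  have hRcard : Rstar.card = r - 3 := by
    rw [hRstardef, Finset.card_image_of_injOn, hKsetcard]
    intro k hk k' hk' hkk
    exact huniq (f k) k k' (hfparts k hk) (hkk ▸ hfparts k' hk')
  have hKsetmem : ∀ k, k ∈ Kset ↔ ¬ Pk k := by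
    intro k
    rw [hKsetdef, Finset.mem_filter]
    simp
  have hRparts : ∀ u ∈ Rstar, u ∉ parts i₁ ∧ u ∉ parts i₂ ∧ u ∉ parts j := by
    intro u hu
    rw [hRstardef, Finset.mem_image] at hu
    obtain ⟨k, hk, rfl⟩ := hu
    have hfk := hfparts k hk
    have hnk := (hKsetmem k).mp hk
    simp only [hPkdef] at hnk
    push_neg at hnk
    obtain ⟨hk2, hk3, hk4⟩ := hnk
    refine ⟨fun hmem => hk4 (huniq _ _ _ hfk hmem), fun hmem => hk2 (huniq _ _ _ hfk hmem),
      fun hmem => hk3 (huniq _ _ _ hfk hmem)⟩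
  have hdecomp : ∀ p ∈ fiber, p.1 ∈ goodS ∧ (p.2 ∈ (CN r G p.1).filter (fun T'' => v₁ ∈ T'')) ∧
      ∃ z, p.2 ∩ parts j = {z} ∧ z ∈ parts j ∧ p.2 = insert v₁ (insert z Rstar) := by
    intro p hp
    rw [hfiberdef, Finset.mem_filter] at hp
    obtain ⟨hpF, hpΨ⟩ := hp
    rw [hFdef, Finset.mem_sigma] at hpF
    obtain ⟨hp1, hp2⟩ := hpF
    obtain ⟨hempty, hcard1⟩ := hstruct _ hp1 _ hp2
    have hv₁p2 : v₁ ∈ p.2 := (Finset.mem_filter.mp hp2).2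
    have hTk : ∀ k, ¬ Pk k → p.2 ∩ parts k = {f k} := by
      intro k hk
      have hc1 : (p.2 ∩ parts k).card = 1 := hcard1 k (fun h => hk (Or.inl h))
      have hne : (p.2 ∩ parts k).Nonempty := by rw [← Finset.card_pos, hc1]; norm_num
      have hψ : ψf p.2 k = f k := congrFun hpΨ k
      rw [hψfdef] at hψ
      simp only [if_neg hk] at hψ
      rw [dif_pos hne] at hψ
      have hmemf : f k ∈ p.2 ∩ parts k := hψ ▸ hne.choose_spec
      apply Finset.eq_singleton_iff_unique_mem.mpr
      refine ⟨hmemf, ?_⟩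
      intro b hb
      exact Finset.card_le_one.mp (le_of_eq hc1) b hb (f k) hmemf
    have hTi₁ : p.2 ∩ parts i₁ = {v₁} := by
      have hc1 : (p.2 ∩ parts i₁).card = 1 := hcard1 i₁ (fun h => h12 h)
      obtain ⟨x, hx⟩ := Finset.card_eq_one.mp hc1
      have hv1m : v₁ ∈ p.2 ∩ parts i₁ := Finset.mem_inter.mpr ⟨hv₁p2, hv₁p⟩
      rw [hx, Finset.mem_singleton] at hv1m
      rw [hx, ← hv1m]
    have hjcard : (p.2 ∩ parts j).card = 1 := hcard1 j hj2
    obtain ⟨z, hz⟩ := Finset.card_eq_one.mp hjcard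
    have hzj : z ∈ parts j := (Finset.mem_inter.mp (hz ▸ Finset.mem_singleton_self z)).2
    have hzT : z ∈ p.2 := (Finset.mem_inter.mp (hz ▸ Finset.mem_singleton_self z)).1
    refine ⟨hp1, hp2, z, hz, hzj, ?_⟩
    apply Finset.Subset.antisymm
    · intro x hx
      obtain ⟨k, hk⟩ := hpcover x
      simp only [Finset.mem_insert]
      by_cases hk2 : k = i₂
      · exact absurd (Finset.mem_inter.mpr ⟨hx, hk2 ▸ hk⟩)
          (by rw [hempty]; exact Finset.notMem_empty x)
      by_cases hkj : k = j
      · have hxz : x ∈ p.2 ∩ parts j := Finset.mem_inter.mpr ⟨hx, hkj ▸ hk⟩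
        rw [hz, Finset.mem_singleton] at hxz
        exact Or.inr (Or.inl hxz)
      by_cases hki : k = i₁
      · have hxz : x ∈ p.2 ∩ parts i₁ := Finset.mem_inter.mpr ⟨hx, hki ▸ hk⟩
        rw [hTi₁, Finset.mem_singleton] at hxz
        exact Or.inl hxz
      · have hnk : ¬ Pk k := by
          simp only [hPkdef]
          push_neg
          exact ⟨hk2, hkj, hki⟩
        have hxz : x ∈ p.2 ∩ parts k := Finset.mem_inter.mpr ⟨hx, hk⟩
        rw [hTk k hnk, Finset.mem_singleton] at hxz
        refine Or.inr (Or.inr ?_)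
        rw [hRstardef, Finset.mem_image]
        exact ⟨k, (hKsetmem k).mpr hnk, hxz.symm⟩
    · intro x hx
      rcases Finset.mem_insert.mp hx with rfl | hx'
      · exact hv₁p2
      rcases Finset.mem_insert.mp hx' with rfl | hx''
      · exact hzT
      · rw [hRstardef, Finset.mem_image] at hx''
        obtain ⟨k, hk, rfl⟩ := hx''
        have hnk : ¬ Pk k := (hKsetmem k).mp hk
        have : f k ∈ p.2 ∩ parts k := by
          rw [hTk k hnk]
          exact Finset.mem_singleton_self _
        exact (Finset.mem_inter.mp this).1
  -- the sets A, Z and the per-S z-sets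
  set A := insert v₁ (insert v Rstar) with hAdef
  have hvR : v ∉ Rstar := fun h => (hRparts v h).2.1 hvp2
  have hv₁A : v₁ ∉ insert v Rstar := by
    simp only [Finset.mem_insert]
    push_neg
    exact ⟨hv1v, fun h => (hRparts v₁ h).1 hv₁p⟩
  have hAcard : A.card = r - 1 := by
    rw [hAdef, Finset.card_insert_of_notMem hv₁A, Finset.card_insert_of_notMem hvR, hRcard]
    omega
  have hAdisj : Disjoint A (parts j) := by
    rw [Finset.disjoint_left]
    intro x hx hxj
    rw [hAdef] at hx
    rcases Finset.mem_insert.mp hx with rfl | hx'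
    · exact (Finset.disjoint_left.mp (hpdisj i₁ j (fun h => hj1 h.symm)) hv₁p) hxj
    rcases Finset.mem_insert.mp hx' with rfl | hx''
    · exact (Finset.disjoint_left.mp (hpdisj i₂ j (fun h => hj2 h.symm)) hvp2) hxj
    · exact (hRparts x hx'').2.2 hxj
  set Z := linkN G A with hZdef
  set ZS : Finset V → Finset V :=
    fun S => (parts j).filter (fun z => insert v₁ (insert z Rstar) ∈ CN r G S) with hZSdef
  have hZS_subZ : ∀ S ∈ goodS, ZS S ⊆ Z := by
    intro S hS z hz
    simp only [hZSdef, Finset.mem_filter] at hz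
    obtain ⟨hzj, hzCN⟩ := hz
    obtain ⟨-, hall⟩ := hCNmem S _ hzCN
    obtain ⟨hvT, hvG⟩ := hall v (hgoodmem S hS).2.2.1
    have hzA : z ∉ A := fun h => Finset.disjoint_left.mp hAdisj h hzj
    have heq : insert v (insert v₁ (insert z Rstar)) = insert z A := by
      rw [hAdef]
      ext x
      simp only [Finset.mem_insert]
      tauto
    rw [hZdef]
    simp only [linkN, Finset.mem_filter, Finset.mem_univ, true_and]
    exact ⟨hzA, by rw [← heq]; exact hvG⟩
  have hZS_link : ∀ S ∈ goodS, ∀ y ∈ S, ZS S ⊆ linkN G (insert v₁ (insert y Rstar)) := by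
    intro S hS y hy z hz
    simp only [hZSdef, Finset.mem_filter] at hz
    obtain ⟨hzj, hzCN⟩ := hz
    obtain ⟨-, hall⟩ := hCNmem S _ hzCN
    obtain ⟨hyT, hyG⟩ := hall y hy
    have hyl : y ∈ parts i₂ := hlinkpart T i₂ hTdisj y ((hgoodmem S hS).1 hy)
    have hzy : z ≠ y := fun h =>
      Finset.disjoint_left.mp (hpdisj j i₂ hj2) hzj (h ▸ hyl)
    have hzv₁ : z ≠ v₁ := fun h =>
      Finset.disjoint_left.mp (hpdisj j i₁ hj1) hzj (h ▸ hv₁p)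
    have hzR : z ∉ Rstar := fun h => (hRparts z h).2.2 hzj
    have hznm : z ∉ insert v₁ (insert y Rstar) := by
      simp only [Finset.mem_insert]
      push_neg
      exact ⟨hzv₁, hzy, hzR⟩
    have heq : insert y (insert v₁ (insert z Rstar)) = insert z (insert v₁ (insert y Rstar)) := by
      ext x
      simp only [Finset.mem_insert]
      tauto
    simp only [linkN, Finset.mem_filter, Finset.mem_univ, true_and]
    exact ⟨hznm, by rw [← heq]; exact hyG⟩
  -- fiber is dominated by the ZS sums
  have hfibsum : (fiber.card : ℝ) ≤ ∑ S ∈ goodS, ((ZS S).card : ℝ) := by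
    have h1 : fiber.card ≤ (goodS.sigma ZS).card := by
      apply Finset.card_le_card_of_injOn
        (fun p => (⟨p.1, if h : (p.2 ∩ parts j).Nonempty then h.choose else v₁⟩ :
          Σ _ : Finset V, V))
      · intro p hp
        obtain ⟨hp1, hp2, z, hz, hzj, hpeq⟩ := hdecomp p hp
        have hne : (p.2 ∩ parts j).Nonempty := ⟨z, hz ▸ Finset.mem_singleton_self z⟩
        have hch : hne.choose = z := by
          have h1 : z ∈ p.2 ∩ parts j := by rw [hz]; exact Finset.mem_singleton_self z
          have hcard : (p.2 ∩ parts j).card ≤ 1 := by rw [hz]; exact le_of_eq (Finset.card_singleton z)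
          exact Finset.card_le_one.mp hcard _ hne.choose_spec _ h1
        rw [Finset.mem_coe, Finset.mem_sigma]
        refine ⟨hp1, ?_⟩
        have hval : (if h : (p.2 ∩ parts j).Nonempty then h.choose else v₁) = z := by
          rw [dif_pos hne]; exact hch
        have hz' : z ∈ ZS p.1 := by
          simp only [hZSdef, Finset.mem_filter]
          refine ⟨hzj, ?_⟩
          rw [← hpeq]
          exact (Finset.mem_filter.mp hp2).1
        dsimp only
        exact hval.symm ▸ hz'
      · intro p hp q hq hpq
        obtain ⟨-, -, z, hz, -, hpeq⟩ := hdecomp p hp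
        obtain ⟨-, -, w, hw, -, hqeq⟩ := hdecomp q hq
        have hnep : (p.2 ∩ parts j).Nonempty := ⟨z, hz ▸ Finset.mem_singleton_self z⟩
        have hneq : (q.2 ∩ parts j).Nonempty := ⟨w, hw ▸ Finset.mem_singleton_self w⟩
        have hchp : hnep.choose = z := by
          have h1 : z ∈ p.2 ∩ parts j := by rw [hz]; exact Finset.mem_singleton_self z
          have hcard : (p.2 ∩ parts j).card ≤ 1 := by rw [hz]; exact le_of_eq (Finset.card_singleton z)
          exact Finset.card_le_one.mp hcard _ hnep.choose_spec _ h1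
        have hchq : hneq.choose = w := by
          have h1 : w ∈ q.2 ∩ parts j := by rw [hw]; exact Finset.mem_singleton_self w
          have hcard : (q.2 ∩ parts j).card ≤ 1 := by rw [hw]; exact le_of_eq (Finset.card_singleton w)
          exact Finset.card_le_one.mp hcard _ hneq.choose_spec _ h1
        obtain ⟨hpq1, hpq2⟩ := Sigma.mk.inj_iff.mp hpq
        have hvp : (if h : (p.2 ∩ parts j).Nonempty then h.choose else v₁) = z := by
          rw [dif_pos hnep]; exact hchp
        have hvq : (if h : (q.2 ∩ parts j).Nonempty then h.choose else v₁) = w := by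
          rw [dif_pos hneq]; exact hchq
        have hzw : z = w := by rw [← hvp, ← hvq]; exact eq_of_heq hpq2
        have h2 : p.2 = q.2 := by rw [hpeq, hqeq, hzw]
        exact Sigma.ext hpq1 (heq_of_eq h2)
    rw [Finset.card_sigma] at h1
    calc (fiber.card : ℝ) ≤ ((∑ S ∈ goodS, (ZS S).card : ℕ) : ℝ) := by exact_mod_cast h1
      _ = ∑ S ∈ goodS, ((ZS S).card : ℝ) := by push_cast; rfl
  have hKt : K' = t₀ * (n:ℝ) ^ ((r:ℝ) - 3) := by
    rw [hK'def, ht₀def, ← Real.rpow_add hnpos]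
    congr 1
    ring
  have hSigZ : (goodS.card : ℝ) * t₀ ≤ ∑ S ∈ goodS, ((ZS S).card : ℝ) := by
    have h2 : (goodS.card : ℝ) * t₀ ≤ (F.card : ℝ) / (n:ℝ) ^ ((r:ℝ) - 3) := by
      rw [le_div_iff₀ hnr3pos]
      calc (goodS.card:ℝ) * t₀ * (n:ℝ) ^ ((r:ℝ) - 3) = (goodS.card:ℝ) * K' := by
            rw [hKt]; ring
        _ ≤ (F.card : ℝ) := hFcard
    exact le_trans (le_trans h2 hfib) hfibsum
  have ht₀pos : (0:ℝ) < t₀ := Real.rpow_pos_of_pos hnpos _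
  have hS₀ : ∃ S₀ ∈ goodS, t₀ ≤ ((ZS S₀).card : ℝ) := by
    by_contra hcon
    push_neg at hcon
    have hlt : ∑ S ∈ goodS, ((ZS S).card:ℝ) < ∑ _S ∈ goodS, t₀ :=
      Finset.sum_lt_sum_of_nonempty hgoodSne hcon
    rw [Finset.sum_const, nsmul_eq_mul] at hlt
    linarith
  obtain ⟨S₀, hS₀g, hS₀Z⟩ := hS₀
  have hZS₀ne : (ZS S₀).Nonempty := by
    rw [← Finset.card_pos]
    exact_mod_cast lt_of_lt_of_le ht₀pos hS₀Z
  obtain ⟨z₀, hz₀⟩ := hZS₀ne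
  have hz₀Z : z₀ ∈ Z := hZS_subZ S₀ hS₀g hz₀
  have hdegA1 : 1 ≤ degSet G A := by
    rw [hZdef] at hz₀Z
    simp only [linkN, Finset.mem_filter, Finset.mem_univ, true_and] at hz₀Z
    have hm : insert z₀ A ∈ G.filter (fun e => A ⊆ e) := by
      rw [Finset.mem_filter]
      exact ⟨hz₀Z.2, Finset.subset_insert _ _⟩
    have := Finset.card_pos.mpr ⟨_, hm⟩
    simpa [degSet] using this
  obtain ⟨Δj, hΔjlo, hΔjhi, hΔjreg⟩ := hreg.2 j
  obtain ⟨-, hdegAhi⟩ := hΔjreg A hAcard hAdisj hdegA1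
  have hZcard_le : (Z.card : ℝ) ≤ D := by
    have h1 : (Z.card:ℝ) ≤ (degSet G A : ℝ) := by exact_mod_cast hlinkcard A
    rw [hDdef]
    calc (Z.card:ℝ) ≤ (degSet G A:ℝ) := h1
      _ ≤ Δj := hdegAhi
      _ ≤ (n:ℝ) ^ (1 - 1/((s:ℝ)-1) + ε) := hΔjhi
  have ht₂pos : (0:ℝ) < t₂ := by
    rw [ht₂def]
    positivity
  -- the family P of s-sets with large ZS
  set P := goodS.filter (fun S => t₂ ≤ ((ZS S).card : ℝ)) with hPdef
  have ht₂t₀ : t₂ ≤ t₀ / 2 := by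
    rw [ht₂def, ht₀def]
    have := Real.rpow_le_rpow_of_exponent_le hn1
      (show 1 - 1/((s:ℝ)-1) - ε - 2*δ ≤ 1 - 1/((s:ℝ)-1) - δ by linarith)
    linarith
  have hPmem' : ∀ S ∈ P, S ∈ goodS := by
    intro S hS
    rw [hPdef] at hS
    exact Finset.mem_of_mem_filter _ hS
  have hPD : (goodS.card : ℝ) * (t₀/2) ≤ (P.card : ℝ) * D := by
    have hsplit := Finset.sum_filter_add_sum_filter_not goodS
      (fun S => t₂ ≤ ((ZS S).card : ℝ)) (fun S => ((ZS S).card : ℝ))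
    have hPle : ∑ S ∈ P, ((ZS S).card:ℝ) ≤ (P.card:ℝ) * D := by
      calc ∑ S ∈ P, ((ZS S).card:ℝ) ≤ ∑ _S ∈ P, D := by
            apply Finset.sum_le_sum
            intro S hS
            have hSg : S ∈ goodS := (hPmem' S hS)
            have hcle := Finset.card_le_card (hZS_subZ S hSg)
            calc ((ZS S).card:ℝ) ≤ (Z.card:ℝ) := by exact_mod_cast hcle
              _ ≤ D := hZcard_le
        _ = (P.card:ℝ) * D := by rw [Finset.sum_const, nsmul_eq_mul]
    have hnotle : ∑ S ∈ goodS.filter (fun S => ¬ t₂ ≤ ((ZS S).card:ℝ)), ((ZS S).card:ℝ)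
        ≤ (goodS.card : ℝ) * t₂ := by
      calc ∑ S ∈ goodS.filter (fun S => ¬ t₂ ≤ ((ZS S).card:ℝ)), ((ZS S).card:ℝ)
          ≤ ∑ _S ∈ goodS.filter (fun S => ¬ t₂ ≤ ((ZS S).card:ℝ)), t₂ := by
            apply Finset.sum_le_sum
            intro S hS
            exact le_of_not_ge (Finset.mem_filter.mp hS).2
        _ = ((goodS.filter (fun S => ¬ t₂ ≤ ((ZS S).card:ℝ))).card : ℝ) * t₂ := by
            rw [Finset.sum_const, nsmul_eq_mul]
        _ ≤ (goodS.card:ℝ) * t₂ := by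
            apply mul_le_mul_of_nonneg_right _ (le_of_lt ht₂pos)
            exact_mod_cast Finset.card_le_card (Finset.filter_subset _ _)
    have hP_eq : ∑ S ∈ P, ((ZS S).card:ℝ)
        + ∑ S ∈ goodS.filter (fun S => ¬ t₂ ≤ ((ZS S).card:ℝ)), ((ZS S).card:ℝ)
        = ∑ S ∈ goodS, ((ZS S).card:ℝ) := by
      rw [hPdef]
      exact hsplit
    have hNst₂ : (goodS.card:ℝ) * t₂ ≤ (goodS.card:ℝ) * (t₀/2) :=
      mul_le_mul_of_nonneg_left ht₂t₀ (Nat.cast_nonneg _)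
    linarith
  have hPmem : ∀ S ∈ P, S ∈ goodS ∧ t₂ ≤ ((ZS S).card : ℝ) := by
    intro S hS
    rw [hPdef, Finset.mem_filter] at hS
    exact hS
  set Y := P.biUnion (fun S => S) with hYdef
  have hYsub : Y ⊆ linkN G T := by
    intro y hy
    rw [hYdef, Finset.mem_biUnion] at hy
    obtain ⟨S, hSP, hyS⟩ := hy
    exact (hgoodmem S (hPmem' S hSP)).1 hyS
  have hPY : P.card ≤ Y.card ^ (s-1) := by
    have h1 : P.card ≤ (Y.powersetCard (s-1)).card := by
      apply Finset.card_le_card_of_injOn (fun S => S.erase v)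
      · intro S hS
        have hSg := hPmem' S hS
        obtain ⟨-, hScard, hvS, -⟩ := hgoodmem S hSg
        rw [Finset.mem_coe, Finset.mem_powersetCard]
        constructor
        · exact subset_trans (Finset.erase_subset _ _)
            (Finset.subset_biUnion_of_mem (fun S => S) hS)
        · rw [Finset.card_erase_of_mem hvS, hScard]
      · intro S hS S' hS' hss
        have hvS := (hgoodmem S (hPmem' S hS)).2.2.1
        have hvS' := (hgoodmem S' (hPmem' S' hS')).2.2.1
        rw [← Finset.insert_erase hvS, ← Finset.insert_erase hvS']
        simp only [Finset.coe_filter] at hss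
        rw [hss]
    calc P.card ≤ (Y.powersetCard (s-1)).card := h1
      _ = (Y.card).choose (s-1) := by rw [Finset.card_powersetCard]
      _ ≤ Y.card ^ (s-1) := Nat.choose_le_pow _ _
  have hDpos : (0:ℝ) < D := by rw [hDdef]; positivity
  have htD : t₀ / D = (n:ℝ) ^ (-δ - ε) := by
    rw [ht₀def, hDdef, ← Real.rpow_sub hnpos]
    congr 1
    ring
  set c₁ : ℝ := (n:ℝ) ^ (-δ - ε) / (2*(r:ℝ)) with hc₁def
  have hc₁pos : (0:ℝ) < c₁ := by
    rw [hc₁def]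
    positivity
  have hc₁le1 : c₁ ≤ 1 := by
    rw [hc₁def]
    have h1 : (n:ℝ) ^ (-δ - ε) ≤ 1 :=
      Real.rpow_le_one_of_one_le_of_nonpos hn1 (by linarith)
    have h2 : (1:ℝ) ≤ 2*(r:ℝ) := by linarith
    calc (n:ℝ) ^ (-δ - ε) / (2*(r:ℝ)) ≤ 1 / (2*(r:ℝ)) :=
          (div_le_div_iff_of_pos_right (by linarith)).mpr h1
      _ ≤ 1 := by
          rw [div_le_one (by linarith)]
          exact h2
  have hYlow : (degSet G T : ℝ) * c₁ ≤ (Y.card : ℝ) := by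
    have hPge : (degSet G T:ℝ)^(s-1) * c₁ ≤ (P.card:ℝ) := by
      have hkey : (degSet G T:ℝ)^(s-1) * (t₀/2) / r ≤ (P.card:ℝ) * D := by
        calc (degSet G T:ℝ)^(s-1) * (t₀/2) / r
            = ((degSet G T:ℝ)^(s-1)/r) * (t₀/2) := by ring
          _ ≤ (goodS.card:ℝ) * (t₀/2) :=
              mul_le_mul_of_nonneg_right hdense0 (by positivity)
          _ ≤ (P.card:ℝ) * D := hPD
      rw [hc₁def, ← htD]
      rw [show (degSet G T:ℝ)^(s-1) * (t₀/D/(2*(r:ℝ)))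
          = ((degSet G T:ℝ)^(s-1) * (t₀/2) / r)/D by field_simp]
      rw [div_le_iff₀ hDpos]
      exact hkey
    have h2 : (degSet G T:ℝ)^(s-1) * c₁ ≤ ((Y.card:ℝ))^(s-1) := by
      calc (degSet G T:ℝ)^(s-1) * c₁ ≤ (P.card:ℝ) := hPge
        _ ≤ ((Y.card:ℝ))^(s-1) := by exact_mod_cast hPY
    have h3 : ((degSet G T:ℝ) * c₁)^(s-1) ≤ (degSet G T:ℝ)^(s-1) * c₁ := by
      rw [mul_pow]
      apply mul_le_mul_of_nonneg_left (pow_le_of_le_one hc₁pos.le hc₁le1 (by omega))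
      positivity
    exact le_of_pow_le_pow_left₀ (by omega) (Nat.cast_nonneg _) (le_trans h3 h2)
  -- final assembly
  refine ⟨Y, hYsub, Z, ?_, Rstar, hRcard, hRparts, ?_, ?_, hZcard_le, ?_⟩
  · intro z hz
    exact hlinkpart A j hAdisj z (hZdef ▸ hz)
  · by_cases hαpos : 0 < α n
    · obtain ⟨Δ₂, hΔ₂lo, hΔ₂hi, hΔ₂reg⟩ := hreg.2 i₂
      obtain ⟨hT2lo, -⟩ := hΔ₂reg T hTcard hTdisj hTdeg
      have hstep1 : (n:ℝ) ^ (1 - 1/((s:ℝ)-1) - 2*ε - δ) / (2*(r:ℝ)* α n)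
          = ((n:ℝ) ^ (1 - 1/((s:ℝ)-1) - ε) / α n) * c₁ := by
        rw [hc₁def]
        rw [div_mul_div_comm, ← Real.rpow_add hnpos]
        rw [show 1 - 1/((s:ℝ)-1) - ε + (-δ - ε) = 1 - 1/((s:ℝ)-1) - 2*ε - δ by ring]
        rw [show α n * (2*(r:ℝ)) = 2*(r:ℝ)* α n by ring]
      rw [hstep1]
      have hstep2 : (n:ℝ) ^ (1 - 1/((s:ℝ)-1) - ε) / α n ≤ Δ₂ / α n :=
        (div_le_div_iff_of_pos_right hαpos).mpr hΔ₂lo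
      calc ((n:ℝ) ^ (1 - 1/((s:ℝ)-1) - ε) / α n) * c₁ ≤ (Δ₂ / α n) * c₁ :=
            mul_le_mul_of_nonneg_right hstep2 hc₁pos.le
        _ ≤ (degSet G T:ℝ) * c₁ := mul_le_mul_of_nonneg_right hT2lo hc₁pos.le
        _ ≤ (Y.card:ℝ) := hYlow
    · push_neg at hαpos
      have hnum : (0:ℝ) ≤ (n:ℝ) ^ (1 - 1/((s:ℝ)-1) - 2*ε - δ) :=
        (Real.rpow_pos_of_pos hnpos _).le
      have hden : 2*(r:ℝ)* α n ≤ 0 := by nlinarith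
      calc (n:ℝ) ^ (1 - 1/((s:ℝ)-1) - 2*ε - δ) / (2*(r:ℝ)* α n) ≤ 0 :=
            div_nonpos_iff.mpr (Or.inl ⟨hnum, hden⟩)
        _ ≤ (Y.card:ℝ) := Nat.cast_nonneg _
  · calc t₀ ≤ ((ZS S₀).card : ℝ) := hS₀Z
      _ ≤ (Z.card:ℝ) := by exact_mod_cast Finset.card_le_card (hZS_subZ S₀ hS₀g)
  · intro y hy
    rw [hYdef, Finset.mem_biUnion] at hy
    obtain ⟨S, hSP, hyS⟩ := hy
    have hSg := hPmem' S hSP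
    have ht₂S : t₂ ≤ ((ZS S).card:ℝ) := by
      have := hSP
      rw [hPdef, Finset.mem_filter] at this
      exact this.2
    have hsub : ZS S ⊆ linkN G (insert v₁ (insert y Rstar)) ∩ Z :=
      fun z hz => Finset.mem_inter.mpr ⟨hZS_link S hSg y hyS hz, hZS_subZ S hSg hz⟩
    calc t₂ ≤ ((ZS S).card:ℝ) := ht₂S
      _ ≤ _ := by exact_mod_cast Finset.card_le_card hsub


end
end

section
/- Let 𝒢 be a K_{s,t}^{(r)}-free r-uniform balanced r-partite hypergraph on rn vertices in which every (r−1)-tuple avoiding part 1 has degree between Δ/β and Δ (for some β ≥ 1), and e(𝒢) ≥ m. Counting pairs (S,T) where T is an (r−1)-tuple avoiding part 1 and S is an s-subset of N_𝒢(T), one obtains at least m·(Δ/(sβ))^{s−1} such pairs; hence some s-set S lies in N_𝒢(T) for at least m·(Δ/(sβ))^{s−1}/n^s tuples T, and therefore rt·Δ·n^{r−3} ≥ cd_𝒢(S) ≥ m·(Δ/(sβ))^{s−1}/n^s. -/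
open Finset
open scoped Classical

noncomputable section

variable {V : Type}

lemma fact_le_aux : ∀ s : ℕ, 3 ≤ s → 3 * s.factorial ≤ 2 * s ^ (s - 1) := by
  intro s hs
  induction s, hs using Nat.le_induction with
  | base => norm_num [Nat.factorial]
  | succ k hk ih =>
    have h1 : 3 * (k+1).factorial = (k+1) * (3 * k.factorial) := by
      rw [Nat.factorial_succ]; ring
    rw [h1]
    calc (k+1) * (3 * k.factorial) ≤ (k+1) * (2 * k ^ (k-1)) := Nat.mul_le_mul_left _ ih
      _ = 2 * ((k+1) * k ^ (k-1)) := by ring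
      _ ≤ 2 * ((k+1) * (k+1) ^ (k-1)) := by
          exact Nat.mul_le_mul_left _ (Nat.mul_le_mul_left _ (Nat.pow_le_pow_left (by omega) _))
      _ = 2 * (k+1) ^ (k-1+1) := by ring
      _ = 2 * (k+1) ^ (k+1-1) := by rw [show k-1+1 = k+1-1 by omega]

lemma choose_lb (d s : ℕ) (hs : 3 ≤ s) (x : ℝ) (hx : 0 ≤ x)
    (hd : 3 * (s:ℝ) ^ 2 ≤ (d:ℝ)) (hxd : (s:ℝ) * x ≤ (d:ℝ)) :
    (d:ℝ) * x ^ (s - 1) ≤ (d.choose s : ℝ) := by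
  have hcast3 : (3:ℝ) ≤ (s:ℝ) := by exact_mod_cast hs
  have hs0 : (0:ℝ) < s := by positivity
  have hd0 : (0:ℝ) < d := by nlinarith
  have hsdR : (s:ℝ) ≤ (d:ℝ) := by nlinarith
  have hsd : s ≤ d := by exact_mod_cast hsdR
  have hdesc : d * (d - s) ^ (s - 1) ≤ d.descFactorial s := by
    rw [Nat.descFactorial_eq_prod_range]
    obtain ⟨s', rfl⟩ : ∃ s', s = s' + 1 := ⟨s - 1, by omega⟩
    rw [Finset.prod_range_succ']
    simp only [Nat.sub_zero, Nat.add_sub_cancel]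
    rw [mul_comm]
    have : (d - (s'+1)) ^ s' ≤ ∏ i ∈ Finset.range s', (d - (i+1)) := by
      calc (d - (s'+1)) ^ s' = ∏ _i ∈ Finset.range s', (d - (s'+1)) := by
            rw [Finset.prod_const, Finset.card_range]
        _ ≤ ∏ i ∈ Finset.range s', (d - (i+1)) :=
            Finset.prod_le_prod' (fun i hi => Nat.sub_le_sub_left (by simp at hi; omega) d)
    exact Nat.mul_le_mul_right d this
  have hfact : (s.factorial : ℝ) ≤ 2/3 * (s:ℝ)^(s-1) := by
    have h := fact_le_aux s hs
    have h' : (3 * s.factorial : ℝ) ≤ 2 * (s:ℝ)^(s-1) := by exact_mod_cast h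
    linarith
  have hx1 : x^(s-1) ≤ ((d:ℝ)/s)^(s-1) :=
    pow_le_pow_left₀ hx (by rw [le_div_iff₀ hs0]; linarith) _
  have hbern : 2/3 * (d:ℝ)^(s-1) ≤ ((d:ℝ) - s)^(s-1) := by
    have hds1 : (s:ℝ)/d ≤ 1 := by rw [div_le_one hd0]; exact hsdR
    have ha : (-2:ℝ) ≤ -((s:ℝ)/d) := by
      have : (0:ℝ) ≤ (s:ℝ)/d := by positivity
      linarith
    have h1 : 1 + ((s-1:ℕ):ℝ) * (-((s:ℝ)/d)) ≤ (1 + (-((s:ℝ)/d)))^(s-1) :=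
      one_add_mul_le_pow ha (s-1)
    have hcs : ((s-1:ℕ):ℝ) = (s:ℝ) - 1 := by
      push_cast [Nat.cast_sub (by omega : 1 ≤ s)]; ring
    have h2 : (2/3:ℝ) ≤ 1 + ((s-1:ℕ):ℝ) * (-((s:ℝ)/d)) := by
      rw [hcs]
      have hq : ((s:ℝ)-1) * ((s:ℝ)/d) ≤ 1/3 := by
        rw [mul_div_assoc', div_le_iff₀ hd0]
        nlinarith
      nlinarith
    have h3 : ((d:ℝ) - s) = d * (1 + (-((s:ℝ)/d))) := by field_simp; ring
    rw [h3, mul_pow]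
    have hc : (2/3:ℝ) ≤ (1 + (-((s:ℝ)/d)))^(s-1) := le_trans h2 h1
    nlinarith [pow_nonneg hd0.le (s-1)]
  have hkey : (s.factorial:ℝ) * x^(s-1) ≤ ((d:ℝ)-s)^(s-1) := by
    have hss : ((s:ℝ) * ((d:ℝ)/s))^(s-1) = (d:ℝ)^(s-1) := by
      rw [mul_div_cancel₀ _ (ne_of_gt hs0)]
    calc (s.factorial:ℝ) * x^(s-1)
        ≤ (2/3 * (s:ℝ)^(s-1)) * ((d:ℝ)/s)^(s-1) :=
          mul_le_mul hfact hx1 (pow_nonneg hx _) (by positivity)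
      _ = 2/3 * ((s:ℝ) * ((d:ℝ)/s))^(s-1) := by rw [mul_pow]; ring
      _ = 2/3 * (d:ℝ)^(s-1) := by rw [hss]
      _ ≤ _ := hbern
  have hcastdesc : (d:ℝ) * ((d:ℝ) - s)^(s-1) ≤ (s.factorial : ℝ) * (d.choose s : ℝ) := by
    have h := Nat.descFactorial_eq_factorial_mul_choose d s
    have h2 : (d * (d-s)^(s-1) : ℕ) ≤ s.factorial * d.choose s := by rw [← h]; exact hdesc
    calc (d:ℝ) * ((d:ℝ)-s)^(s-1) = ((d * (d-s)^(s-1) : ℕ) : ℝ) := by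
          push_cast [Nat.cast_sub hsd]; ring
      _ ≤ _ := by exact_mod_cast h2
  have hfin : (s.factorial:ℝ) * ((d:ℝ) * x^(s-1)) ≤ (s.factorial:ℝ) * (d.choose s : ℝ) := by
    calc (s.factorial:ℝ) * ((d:ℝ)*x^(s-1)) = (d:ℝ) * ((s.factorial:ℝ) * x^(s-1)) := by ring
      _ ≤ (d:ℝ) * (((d:ℝ)-s)^(s-1)) := mul_le_mul_of_nonneg_left hkey hd0.le
      _ ≤ _ := hcastdesc
  exact le_of_mul_le_mul_left hfin (by positivity)

-- every edge has r vertices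
lemma edge_card {r n : ℕ} {parts : Fin r → Finset V} {G : Finset (Finset V)}
    (hpart : IsPartite r n parts G) {e : Finset V} (he : e ∈ G) : e.card = r := by
  obtain ⟨hdisj, hcov, hcardn, hedge⟩ := hpart
  have heq : e = Finset.univ.biUnion (fun i : Fin r => e ∩ parts i) := by
    ext v
    simp only [Finset.mem_biUnion, Finset.mem_univ, true_and, Finset.mem_inter]
    constructor
    · intro hv; obtain ⟨i, hi⟩ := hcov v; exact ⟨i, hv, hi⟩
    · rintro ⟨i, hv, -⟩; exact hv
  rw [heq, Finset.card_biUnion]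
  · simp [hedge e he]
  · intro i _ j _ hij
    exact Finset.disjoint_of_subset_left (Finset.inter_subset_right)
      (Finset.disjoint_of_subset_right (Finset.inter_subset_right) (hdisj i j hij))

-- degree bound for smaller sets
lemma degSet_bound {r n : ℕ} {parts : Fin r → Finset V} {G : Finset (Finset V)}
    (hpart : IsPartite r n parts G) {Δ : ℝ} (hΔ0 : 0 ≤ Δ)
    (hub : ∀ T : Finset V, T.card = r - 1 → (degSet G T : ℝ) ≤ Δ) :
    ∀ j : ℕ, ∀ A : Finset V, A.card + j = r - 1 → (degSet G A : ℝ) ≤ Δ * (n:ℝ)^j := by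
  intro j
  induction j with
  | zero =>
    intro A hA
    simpa using hub A (by omega)
  | succ j ih =>
    intro A hA
    by_cases hne : (G.filter fun e => A ⊆ e).Nonempty
    · obtain ⟨e0, he0⟩ := hne
      rw [Finset.mem_filter] at he0
      obtain ⟨he0G, hAe0⟩ := he0
      have hce0 : e0.card = r := edge_card hpart he0G
      have hlt : A.card < e0.card := by omega
      have hsd : (e0 \ A).Nonempty := by
        rw [← Finset.card_pos, Finset.card_sdiff_of_subset hAe0]; omega
      obtain ⟨w0, hw0⟩ := hsd
      rw [Finset.mem_sdiff] at hw0
      obtain ⟨j0, hj0⟩ := hpart.2.1 w0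
      -- A is disjoint from parts j0
      have hAdisj : ∀ a ∈ A, a ∉ parts j0 := by
        intro a ha hap
        have h1 := hpart.2.2.2 e0 he0G j0
        have hsub : {w0, a} ⊆ e0 ∩ parts j0 := by
          intro x hx
          simp only [Finset.mem_insert, Finset.mem_singleton] at hx
          rcases hx with rfl | rfl
          · exact Finset.mem_inter.2 ⟨hw0.1, hj0⟩
          · exact Finset.mem_inter.2 ⟨hAe0 ha, hap⟩
        have : ({w0, a} : Finset V).card ≤ 1 := h1 ▸ Finset.card_le_card hsub
        have hwa : w0 ≠ a := fun h => hw0.2 (h ▸ ha)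
        rw [Finset.card_insert_of_notMem (by simpa using hwa)] at this
        simp at this
      -- counting
      have hcount : (degSet G A : ℝ) ≤ ∑ w ∈ parts j0, (degSet G (insert w A) : ℝ) := by
        have hnat : degSet G A ≤ ∑ w ∈ parts j0, degSet G (insert w A) := by
          unfold degSet
          simp only [Finset.card_filter]
          rw [Finset.sum_comm]
          apply Finset.sum_le_sum
          intro e heG
          by_cases hAe : A ⊆ e
          · simp only [if_pos hAe]
            have h1 := hpart.2.2.2 e heG j0
            have : (e ∩ parts j0).Nonempty := by
              rw [← Finset.card_pos, h1]; norm_num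
            obtain ⟨w, hw⟩ := this
            rw [Finset.mem_inter] at hw
            have hwe : insert w A ⊆ e := Finset.insert_subset hw.1 hAe
            have hle := Finset.single_le_sum
              (f := fun w' => if insert w' A ⊆ e then (1:ℕ) else 0)
              (fun i _ => Nat.zero_le _) hw.2
            simpa [hwe] using hle
          · simp only [if_neg hAe]
            positivity
        calc (degSet G A : ℝ) ≤ ((∑ w ∈ parts j0, degSet G (insert w A) : ℕ) : ℝ) := by
              exact_mod_cast hnat
          _ = _ := by push_cast; ring
      calc (degSet G A : ℝ) ≤ ∑ w ∈ parts j0, (degSet G (insert w A) : ℝ) := hcount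
        _ ≤ ∑ w ∈ parts j0, Δ * (n:ℝ)^j := Finset.sum_le_sum (fun w hw => ih _
            (by rw [Finset.card_insert_of_notMem (fun hcon => hAdisj w hcon hw)]; omega))
        _ = ((parts j0).card : ℝ) * (Δ * (n:ℝ)^j) := by rw [Finset.sum_const, nsmul_eq_mul]
        _ = Δ * (n:ℝ)^(j+1) := by rw [hpart.2.2.1 j0]; ring
    · unfold degSet
      rw [Finset.not_nonempty_iff_eq_empty] at hne
      rw [hne]
      simp
      positivity

-- linkN card equals degSet for (r-1)-sets
lemma linkN_card [Fintype V] {r n : ℕ} {parts : Fin r → Finset V} {G : Finset (Finset V)}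
    (hpart : IsPartite r n parts G) {T : Finset V} (hT : T.card = r - 1) (hr : 3 ≤ r) :
    (linkN G T).card = degSet G T := by
  unfold degSet
  apply Finset.card_bij (fun v _ => insert v T)
  · intro v hv
    simp only [linkN, Finset.mem_filter, Finset.mem_univ, true_and] at hv
    exact Finset.mem_filter.2 ⟨hv.2, Finset.subset_insert _ _⟩
  · intro v1 hv1 v2 hv2 heq
    simp only [linkN, Finset.mem_filter, Finset.mem_univ, true_and] at hv1 hv2
    have : v1 ∈ insert v2 T := heq ▸ Finset.mem_insert_self v1 T
    rcases Finset.mem_insert.1 this with h | h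
    · exact h
    · exact absurd h hv1.1
  · intro e he
    rw [Finset.mem_filter] at he
    obtain ⟨heG, hTe⟩ := he
    have hce : e.card = r := edge_card hpart heG
    have h1 : (e \ T).card = 1 := by rw [Finset.card_sdiff_of_subset hTe]; omega
    obtain ⟨v, hv⟩ := Finset.card_eq_one.1 h1
    have hvm : v ∈ e \ T := hv ▸ Finset.mem_singleton_self v
    rw [Finset.mem_sdiff] at hvm
    refine ⟨v, ?_, ?_⟩
    · simp only [linkN, Finset.mem_filter, Finset.mem_univ, true_and]
      have : insert v T = e := by
        apply Finset.eq_of_subset_of_card_le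
        · exact Finset.insert_subset hvm.1 hTe
        · rw [Finset.card_insert_of_notMem hvm.2]; omega
      exact ⟨hvm.2, this ▸ heG⟩
    · apply Finset.eq_of_subset_of_card_le
      · exact Finset.insert_subset hvm.1 hTe
      · rw [Finset.card_insert_of_notMem hvm.2]; omega

-- codegree bound
lemma cd_bound [Fintype V] {r s t n : ℕ} {parts : Fin r → Finset V} {G : Finset (Finset V)}
    (hpart : IsPartite r n parts G) (hfree : KstFree r s t G)
    (hr : 3 ≤ r) (hs : 3 ≤ s) (ht : 1 ≤ t) {Δ : ℝ} (hΔ0 : 0 ≤ Δ)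
    (hub : ∀ T : Finset V, T.card = r - 1 → (degSet G T : ℝ) ≤ Δ)
    {S : Finset V} (hS : S.card = s) :
    ((CN r G S).card : ℝ) ≤ (r:ℝ) * t * Δ * (n:ℝ)^(r-3) := by
  obtain ⟨v0, hv0⟩ : S.Nonempty := by rw [← Finset.card_pos, hS]; omega
  set 𝒞 := CN r G S with h𝒞
  -- the collection of pairwise disjoint subfamilies
  set cand := 𝒞.powerset.filter (fun F =>
    ∀ T1 ∈ F, ∀ T2 ∈ F, T1 ≠ T2 → Disjoint T1 T2) with hcand
  have hne : cand.Nonempty := ⟨∅, by simp [hcand]⟩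
  obtain ⟨F, hF, hFmax⟩ := Finset.exists_max_image cand Finset.card hne
  rw [hcand, Finset.mem_filter, Finset.mem_powerset] at hF
  obtain ⟨hF𝒞, hFdisj⟩ := hF
  -- F has fewer than t members
  have hFt : F.card < t := by
    by_contra hcon
    push_neg at hcon
    obtain ⟨F', hF'F, hF'card⟩ := Finset.exists_subset_card_eq hcon
    apply hfree
    set e := Finset.equivFinOfCardEq hF'card
    refine ⟨fun i => (e.symm i : Finset V), S, ?_, hS, ?_, ?_, ?_⟩
    · intro i
      have := hF𝒞 (hF'F (e.symm i).2)
      rw [h𝒞, CN, Finset.mem_filter] at this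
      exact this.2.1
    · intro i j hij
      apply hFdisj _ (hF'F (e.symm i).2) _ (hF'F (e.symm j).2)
      intro hcon2
      exact hij (by
        have : (e.symm i) = (e.symm j) := Subtype.ext hcon2
        simpa using congrArg e this)
    · intro i
      have := hF𝒞 (hF'F (e.symm i).2)
      rw [h𝒞, CN, Finset.mem_filter] at this
      rw [Finset.disjoint_right]
      exact fun {a} ha => (this.2.2 a ha).1
    · intro i y hy
      have := hF𝒞 (hF'F (e.symm i).2)
      rw [h𝒞, CN, Finset.mem_filter] at this
      exact (this.2.2 y hy).2
  -- the cover
  set C := F.biUnion id with hC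
  have hcover : ∀ T ∈ 𝒞, ∃ u ∈ C, u ∈ T := by
    intro T hT
    by_contra hcon
    push_neg at hcon
    have hTdisjC : Disjoint T C := by
      rw [Finset.disjoint_left]
      exact fun {a} ha hac => hcon a hac ha
    have hTne : T.Nonempty := by
      rw [h𝒞, CN, Finset.mem_filter] at hT
      rw [← Finset.card_pos, hT.2.1]; omega
    have hsubC : ∀ T' ∈ F, T' ⊆ C := fun T' h a ha => Finset.mem_biUnion.2 ⟨T', h, ha⟩
    have hTF : T ∉ F := by
      intro hTF
      obtain ⟨a, ha⟩ := hTne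
      exact hcon a (hsubC T hTF ha) ha
    have hins : insert T F ∈ cand := by
      rw [hcand, Finset.mem_filter, Finset.mem_powerset]
      constructor
      · exact Finset.insert_subset hT hF𝒞
      · intro T1 h1 T2 h2 h12
        by_cases e1 : T1 = T <;> by_cases e2 : T2 = T
        · exact absurd (e1.trans e2.symm) h12
        · subst e1
          exact Finset.disjoint_of_subset_right
            (hsubC T2 ((Finset.mem_insert.1 h2).resolve_left e2)) hTdisjC
        · subst e2
          exact (Finset.disjoint_of_subset_right
            (hsubC T1 ((Finset.mem_insert.1 h1).resolve_left e1)) hTdisjC).symm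
        · exact hFdisj _ ((Finset.mem_insert.1 h1).resolve_left e1)
            _ ((Finset.mem_insert.1 h2).resolve_left e2) h12
    have := hFmax _ hins
    rw [Finset.card_insert_of_notMem hTF] at this
    omega
  -- bound |C|
  have hCcard : C.card ≤ (t-1) * (r-1) := by
    calc C.card ≤ ∑ T ∈ F, T.card := Finset.card_biUnion_le
      _ ≤ ∑ _T ∈ F, (r-1) := Finset.sum_le_sum (fun T hT => by
          have := hF𝒞 hT
          rw [h𝒞, CN, Finset.mem_filter] at this
          omega)
      _ = F.card * (r-1) := by rw [Finset.sum_const, smul_eq_mul]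
      _ ≤ (t-1) * (r-1) := Nat.mul_le_mul_right _ (by omega)
  -- each vertex u in C covers at most Δ n^{r-3} members
  have hu_bound : ∀ u ∈ C, ((𝒞.filter fun T => u ∈ T).card : ℝ) ≤ Δ * (n:ℝ)^(r-3) := by
    intro u hu
    -- u ≠ v0
    have huv0 : u ≠ v0 := by
      obtain ⟨T', hT'F, huT'⟩ := Finset.mem_biUnion.1 hu
      have := hF𝒞 hT'F
      rw [h𝒞, CN, Finset.mem_filter] at this
      intro h
      exact (this.2.2 v0 hv0).1 (h ▸ huT')
    have hpair : ({v0, u} : Finset V).card = 2 := by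
      rw [Finset.card_insert_of_notMem (by simpa using (Ne.symm huv0)), Finset.card_singleton]
    have hinj : (𝒞.filter fun T => u ∈ T).card ≤ degSet G {v0, u} := by
      unfold degSet
      apply Finset.card_le_card_of_injOn (fun T => insert v0 T)
      · intro T hT
        rw [Finset.mem_coe, Finset.mem_filter] at hT
        obtain ⟨hT𝒞, huT⟩ := hT
        rw [h𝒞, CN, Finset.mem_filter] at hT𝒞
        rw [Finset.mem_coe, Finset.mem_filter]
        refine ⟨(hT𝒞.2.2 v0 hv0).2, ?_⟩
        intro x hx
        rcases Finset.mem_insert.1 hx with rfl | hx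
        · exact Finset.mem_insert_self _ _
        · rw [Finset.mem_singleton] at hx
          exact Finset.mem_insert_of_mem (hx ▸ huT)
      · intro T1 h1 T2 h2 heq
        simp only [Finset.coe_filter, Set.mem_setOf_eq] at h1 h2
        have hv01 : v0 ∉ T1 := by
          rw [h𝒞, CN, Finset.mem_filter] at h1
          exact (h1.1.2.2 v0 hv0).1
        have hv02 : v0 ∉ T2 := by
          rw [h𝒞, CN, Finset.mem_filter] at h2
          exact (h2.1.2.2 v0 hv0).1
        have := congrArg (fun X => Finset.erase X v0) heq
        simpa [Finset.erase_insert hv01, Finset.erase_insert hv02] using this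
    calc ((𝒞.filter fun T => u ∈ T).card : ℝ) ≤ (degSet G {v0, u} : ℝ) := by exact_mod_cast hinj
      _ ≤ Δ * (n:ℝ)^(r-3) := degSet_bound hpart hΔ0 hub (r-3) _ (by omega)
  -- total
  have hsum : (𝒞.card : ℝ) ≤ ∑ u ∈ C, ((𝒞.filter fun T => u ∈ T).card : ℝ) := by
    have hnat : 𝒞.card ≤ ∑ u ∈ C, (𝒞.filter fun T => u ∈ T).card := by
      simp only [Finset.card_filter]
      rw [Finset.sum_comm]
      calc 𝒞.card = ∑ _T ∈ 𝒞, 1 := by simp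
        _ ≤ _ := Finset.sum_le_sum (fun T hT => by
            obtain ⟨u, huC, huT⟩ := hcover T hT
            have hle := Finset.single_le_sum
              (f := fun u' => if u' ∈ T then (1:ℕ) else 0)
              (fun i _ => Nat.zero_le _) huC
            simpa [huT] using hle)
    exact_mod_cast le_trans (Nat.cast_le.2 hnat) (by push_cast; exact le_refl _)
  calc (𝒞.card : ℝ) ≤ ∑ u ∈ C, ((𝒞.filter fun T => u ∈ T).card : ℝ) := hsum
    _ ≤ ∑ _u ∈ C, Δ * (n:ℝ)^(r-3) := Finset.sum_le_sum hu_bound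
    _ = (C.card : ℝ) * (Δ * (n:ℝ)^(r-3)) := by rw [Finset.sum_const, nsmul_eq_mul]
    _ ≤ (((t-1) * (r-1) : ℕ) : ℝ) * (Δ * (n:ℝ)^(r-3)) := by
        apply mul_le_mul_of_nonneg_right (by exact_mod_cast hCcard) (by positivity)
    _ ≤ (r:ℝ) * t * Δ * (n:ℝ)^(r-3) := by
        have h1 : (((t-1) * (r-1) : ℕ) : ℝ) ≤ (r:ℝ) * t := by
          have : ((t-1) * (r-1) : ℕ) ≤ t * r := Nat.mul_le_mul (by omega) (by omega)
          calc (((t-1) * (r-1) : ℕ) : ℝ) ≤ ((t * r : ℕ) : ℝ) := by exact_mod_cast this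
            _ = (r:ℝ) * t := by push_cast; ring
        have h2 : (0:ℝ) ≤ Δ * (n:ℝ)^(r-3) := by positivity
        nlinarith

theorem stmt_19 {V : Type} [Fintype V] (r s t n m : ℕ) (hr : 3 ≤ r) (hs : 3 ≤ s) (ht : 1 ≤ t)
    (hsn : s ≤ n)
    (Δ β : ℝ) (hβ : 1 ≤ β) (hbig : 3 * (s : ℝ) ^ 2 ≤ Δ / β)
    (parts : Fin r → Finset V) (p : Fin r)
    (G : Finset (Finset V)) (hpart : IsPartite r n parts G) (hfree : KstFree r s t G)
    (hub : ∀ T : Finset V, T.card = r - 1 → (degSet G T : ℝ) ≤ Δ)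
    (hlb : ∀ T : Finset V, T.card = r - 1 → Disjoint T (parts p) → 1 ≤ degSet G T →
      Δ / β ≤ (degSet G T : ℝ))
    (hm : m ≤ G.card) :
    let Tups := (Finset.univ : Finset (Finset V)).filter fun T =>
      T.card = r - 1 ∧ Disjoint T (parts p) ∧ 1 ≤ degSet G T
    let M : ℝ := ∑ T ∈ Tups, (((linkN G T).powersetCard s).card : ℝ)
    ((m : ℝ) * (Δ / ((s : ℝ) * β)) ^ (s - 1) ≤ M) ∧
    (∃ S : Finset V, S.card = s ∧
      M / (n : ℝ) ^ s ≤ ((Tups.filter fun T => S ⊆ linkN G T).card : ℝ)) ∧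
    (m : ℝ) * (Δ / ((s : ℝ) * β)) ^ (s - 1) / (n : ℝ) ^ s ≤
      (r : ℝ) * t * Δ * (n : ℝ) ^ (r - 3) := by
  intro Tups M
  have hs3 : (3:ℝ) ≤ (s:ℝ) := by exact_mod_cast hs
  have hβ0 : (0:ℝ) < β := lt_of_lt_of_le one_pos hβ
  have hΔβpos : (0:ℝ) < Δ / β := lt_of_lt_of_le (by nlinarith) hbig
  have hΔ0 : (0:ℝ) < Δ := by
    have := mul_pos hΔβpos hβ0
    rwa [div_mul_cancel₀ _ (ne_of_gt hβ0)] at this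
  set x : ℝ := Δ / ((s : ℝ) * β) with hxdef
  have hx0 : 0 ≤ x := by positivity
  have hsx : (s:ℝ) * x = Δ / β := by
    rw [hxdef]
    field_simp
  have hTmem : ∀ T : Finset V, T ∈ Tups ↔
      (T.card = r - 1 ∧ Disjoint T (parts p) ∧ 1 ≤ degSet G T) := by
    intro T
    simp only [Tups, Finset.mem_filter, Finset.mem_univ, true_and]
  -- sum of degrees at least |G|
  have hsumdeg : G.card ≤ ∑ T ∈ Tups, degSet G T := by
    simp only [degSet, Finset.card_filter]
    rw [Finset.sum_comm]
    calc G.card = ∑ _e ∈ G, 1 := by simp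
      _ ≤ _ := Finset.sum_le_sum (fun e he => by
          have hce : e.card = r := edge_card hpart he
          have h1 : (e ∩ parts p).card = 1 := hpart.2.2.2 e he p
          have hcd : (e \ parts p).card = r - 1 := by
            have := Finset.card_inter_add_card_sdiff e (parts p)
            omega
          have hmem : (e \ parts p) ∈ Tups := by
            rw [hTmem]
            refine ⟨hcd, Finset.sdiff_disjoint, ?_⟩
            exact Finset.card_pos.2 ⟨e, Finset.mem_filter.2 ⟨he, Finset.sdiff_subset⟩⟩
          have hsub : e \ parts p ⊆ e := Finset.sdiff_subset
          have hle := Finset.single_le_sum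
            (f := fun T => if T ⊆ e then (1:ℕ) else 0)
            (fun i _ => Nat.zero_le _) hmem
          simpa [hsub] using hle)
  -- Part 1
  have part1 : (m:ℝ) * x ^ (s-1) ≤ M := by
    have hperT : ∀ T ∈ Tups, (degSet G T : ℝ) * x^(s-1) ≤
        (((linkN G T).powersetCard s).card : ℝ) := by
      intro T hT
      rw [hTmem] at hT
      obtain ⟨hT1, hT2, hT3⟩ := hT
      have hdlb : Δ / β ≤ (degSet G T : ℝ) := hlb T hT1 hT2 hT3
      rw [Finset.card_powersetCard, linkN_card hpart hT1 hr]
      exact choose_lb _ s hs x hx0 (le_trans hbig hdlb) (by rw [hsx]; exact hdlb)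
    calc (m:ℝ) * x^(s-1) ≤ (∑ T ∈ Tups, (degSet G T : ℝ)) * x^(s-1) := by
          apply mul_le_mul_of_nonneg_right _ (pow_nonneg hx0 _)
          calc (m:ℝ) ≤ (G.card : ℝ) := by exact_mod_cast hm
            _ ≤ _ := by
                rw [← Nat.cast_sum]
                exact_mod_cast hsumdeg
      _ = ∑ T ∈ Tups, (degSet G T : ℝ) * x^(s-1) := by rw [Finset.sum_mul]
      _ ≤ ∑ T ∈ Tups, (((linkN G T).powersetCard s).card : ℝ) := Finset.sum_le_sum hperT
      _ = M := rfl
  -- link neighborhoods live in part p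
  have hlink_sub : ∀ T ∈ Tups, linkN G T ⊆ parts p := by
    intro T hT v hv
    rw [hTmem] at hT
    simp only [linkN, Finset.mem_filter, Finset.mem_univ, true_and] at hv
    obtain ⟨hvT, hvG⟩ := hv
    have h1 : (insert v T ∩ parts p).card = 1 := hpart.2.2.2 _ hvG p
    have hne : (insert v T ∩ parts p).Nonempty := by
      rw [← Finset.card_pos, h1]; norm_num
    obtain ⟨w, hw⟩ := hne
    rw [Finset.mem_inter] at hw
    rcases Finset.mem_insert.1 hw.1 with rfl | hwT
    · exact hw.2
    · exact absurd hw.2 (Finset.disjoint_left.1 hT.2.1 hwT)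
  -- Part 2
  set PS := Finset.powersetCard s (parts p) with hPS
  have h1 : ∀ T ∈ Tups, Finset.powersetCard s (linkN G T) =
      PS.filter fun S => S ⊆ linkN G T := by
    intro T hT
    ext A
    simp only [Finset.mem_powersetCard, hPS, Finset.mem_filter]
    exact ⟨fun ⟨h1, h2⟩ => ⟨⟨h1.trans (hlink_sub T hT), h2⟩, h1⟩,
      fun ⟨⟨_, h2⟩, h3⟩ => ⟨h3, h2⟩⟩
  have hMnat : (∑ T ∈ Tups, (Finset.powersetCard s (linkN G T)).card) =
      ∑ S ∈ PS, (Tups.filter fun T => S ⊆ linkN G T).card := by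
    calc ∑ T ∈ Tups, (Finset.powersetCard s (linkN G T)).card
        = ∑ T ∈ Tups, (PS.filter fun S => S ⊆ linkN G T).card :=
          Finset.sum_congr rfl (fun T hT => by rw [h1 T hT])
      _ = ∑ T ∈ Tups, ∑ S ∈ PS, if S ⊆ linkN G T then 1 else 0 := by
          simp only [Finset.card_filter]
      _ = ∑ S ∈ PS, ∑ T ∈ Tups, if S ⊆ linkN G T then 1 else 0 := Finset.sum_comm
      _ = ∑ S ∈ PS, (Tups.filter fun T => S ⊆ linkN G T).card := by
          simp only [Finset.card_filter]
  have hMeq : M = ((∑ S ∈ PS, (Tups.filter fun T => S ⊆ linkN G T).card : ℕ) : ℝ) := by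
    show (∑ T ∈ Tups, ((Finset.powersetCard s (linkN G T)).card : ℝ)) = _
    rw [← hMnat, Nat.cast_sum]
  have hM0 : 0 ≤ M := by
    rw [hMeq]
    exact Nat.cast_nonneg _
  have hPScardn : PS.card = n.choose s := by
    rw [hPS, Finset.card_powersetCard, hpart.2.2.1 p]
  have hPSne : PS.Nonempty := by
    rw [← Finset.card_pos, hPScardn]
    exact Nat.choose_pos hsn
  have hPSpos : (0:ℝ) < PS.card := by
    exact_mod_cast Finset.card_pos.2 hPSne
  have hPSle : (PS.card : ℝ) ≤ (n:ℝ)^s := by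
    rw [hPScardn]
    exact_mod_cast Nat.choose_le_pow n s
  obtain ⟨S, hSPS, hSavg⟩ := Finset.exists_le_of_sum_le (f := fun _ => M / (PS.card : ℝ))
    (g := fun S => ((Tups.filter fun T => S ⊆ linkN G T).card : ℝ)) hPSne
    (by
      rw [Finset.sum_const, nsmul_eq_mul, mul_div_cancel₀ _ (ne_of_gt hPSpos), hMeq,
        Nat.cast_sum])
  have hScard : S.card = s := by
    have h := hSPS
    rw [hPS] at h
    exact (Finset.mem_powersetCard.1 h).2
  have hn0 : (0:ℝ) < (n:ℝ)^s := by
    have hn : 0 < n := by omega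
    positivity
  have havg' : M / (n:ℝ)^s ≤ ((Tups.filter fun T => S ⊆ linkN G T).card : ℝ) := by
    refine le_trans ?_ hSavg
    apply div_le_div_of_nonneg_left hM0 hPSpos hPSle
  -- Part 3
  have hsubCN : (Tups.filter fun T => S ⊆ linkN G T) ⊆ CN r G S := by
    intro T hT
    rw [Finset.mem_filter] at hT
    obtain ⟨hT1, hT2⟩ := hT
    rw [hTmem] at hT1
    simp only [CN, Finset.mem_filter, Finset.mem_univ, true_and]
    refine ⟨hT1.1, fun v hv => ?_⟩
    have := hT2 hv
    simp only [linkN, Finset.mem_filter, Finset.mem_univ, true_and] at this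
    exact this
  have part3 : (m:ℝ) * x^(s-1) / (n:ℝ)^s ≤ (r:ℝ) * t * Δ * (n:ℝ)^(r-3) := by
    calc (m:ℝ) * x^(s-1) / (n:ℝ)^s ≤ M / (n:ℝ)^s := by
          exact div_le_div_of_nonneg_right part1 hn0.le
      _ ≤ ((Tups.filter fun T => S ⊆ linkN G T).card : ℝ) := havg'
      _ ≤ ((CN r G S).card : ℝ) := by exact_mod_cast Finset.card_le_card hsubCN
      _ ≤ _ := cd_bound hpart hfree hr hs ht (le_of_lt hΔ0) hub hScard
  exact ⟨part1, ⟨S, hScard, havg'⟩, part3⟩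

end
end
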